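/- arXiv:1106.5968 — 8 statements merged into one kernel-verified Lean document; each statement's English description precedes it below -/
import Mathlib

section
/- Let k be an algebraically closed field of characteristic zero, S = k[x_1,...,x_n], and let I ⊆ S be a J-cellular binomial ideal for some J ⊆ {1,...,n}. For every monomial m in the variables x_i with i ∉ J whose image in S/I is nonzero, every associated prime of the ideal ((I : m) ∩ k[J])·S + m_J of S is an associated prime of I. -/
open MvPolynomial

section Defs

variable {k : Type*} [Field k] {σ : Type*} {n : ℕ}

/-- A binomial: `x^u - a·x^v` (monomials arise for `a = 0`). -/
def IsBinomial (f : MvPolynomial σ k) : Prop :=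
  ∃ (u v : σ →₀ ℕ) (a : k), f = monomial u 1 - monomial v a

/-- A binomial ideal is an ideal generated by binomials. -/
def IsBinomialIdeal (I : Ideal (MvPolynomial σ k)) : Prop :=
  ∃ B : Set (MvPolynomial σ k), (∀ f ∈ B, IsBinomial f) ∧ I = Ideal.span B

/-- `I` is `J`-cellular: the variables in `J` are nonzerodivisors mod `I`,
the variables outside `J` are nilpotent mod `I`. -/
def IsCellular (J : Set (Fin n)) (I : Ideal (MvPolynomial (Fin n) k)) : Prop :=
  (∀ i ∈ J, ∀ f : MvPolynomial (Fin n) k, X i * f ∈ I → f ∈ I) ∧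
  (∀ i ∉ J, ∃ d : ℕ, (X i : MvPolynomial (Fin n) k) ^ d ∈ I)

/-- The monomial ideal `m_J = ⟨x_i : i ∉ J⟩`. -/
noncomputable def cellMax (k : Type*) [Field k] (J : Set (Fin n)) : Ideal (MvPolynomial (Fin n) k) :=
  Ideal.span {f | ∃ i ∉ J, f = X i}

/-- The inclusion `k[J] → S = k[x_1, …, x_n]`. -/
noncomputable def inclJ (k : Type*) [Field k] (J : Set (Fin n)) :
    MvPolynomial ↥J k →ₐ[k] MvPolynomial (Fin n) k :=
  rename Subtype.val

/-- The elimination ideal `I ∩ k[J]`, as an ideal of `k[J]`. -/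
noncomputable def elimJ (J : Set (Fin n)) (I : Ideal (MvPolynomial (Fin n) k)) :
    Ideal (MvPolynomial ↥J k) :=
  Ideal.comap (inclJ k J) I

/-- A monomial (nonzero coefficient) supported on the variables outside `J`. -/
def IsMonomialOff (J : Set (Fin n)) (m : MvPolynomial (Fin n) k) : Prop :=
  ∃ (u : Fin n →₀ ℕ) (c : k), c ≠ 0 ∧ (∀ i ∈ u.support, i ∉ J) ∧ m = monomial u c

/-- An associated prime of `I`: a prime ideal of the form `(I : f)`. -/
def IsAssociatedPrimeOf (I P : Ideal (MvPolynomial σ k)) : Prop :=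
  P.IsPrime ∧ ∃ f : MvPolynomial σ k, P = I.colon (Ideal.span {f})

/-- A partial character on `ℤ^σ`: a sublattice `L ⊆ ℤ^σ` together with a
group homomorphism `L → kˣ`. -/
structure PartialCharacter (k : Type*) [Field k] (σ : Type*) where
  L : AddSubgroup (σ →₀ ℤ)
  ρ : L → kˣ
  map_add : ∀ u v : L, ρ (u + v) = ρ u * ρ v

/-- The componentwise positive part of an integer exponent vector. -/
noncomputable def intPosPart (u : σ →₀ ℤ) : σ →₀ ℕ := u.mapRange Int.toNat Int.toNat_zero

/-- The lattice ideal `I_ρ = ⟨x^{u⁺} - ρ(u)·x^{u⁻} : u ∈ L⟩` of a partial character. -/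
noncomputable def PartialCharacter.latticeIdeal (c : PartialCharacter k σ) :
    Ideal (MvPolynomial σ k) :=
  Ideal.span {f | ∃ u : c.L, f =
    monomial (intPosPart (u : σ →₀ ℤ)) 1 -
      monomial (intPosPart (-(u : σ →₀ ℤ))) ((c.ρ u : kˣ) : k)}

/-- A partial character is saturated if its lattice equals its saturation
`(ℚ ⊗ L) ∩ ℤ^σ = {u : ∃ d ≠ 0, d • u ∈ L}`. -/
def PartialCharacter.Saturated (c : PartialCharacter k σ) : Prop :=
  ∀ (d : ℤ) (u : σ →₀ ℤ), d ≠ 0 → d • u ∈ c.L → u ∈ c.L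

end Defs


section Aux

variable {k : Type*} [Field k] {n : ℕ}

open Classical in
noncomputable def projJ (k : Type*) [Field k] {n : ℕ} (J : Set (Fin n)) :
    MvPolynomial (Fin n) k →ₐ[k] MvPolynomial (Fin n) k :=
  aeval (fun i => if i ∈ J then X i else 0)

open Classical in
noncomputable def projJ' (k : Type*) [Field k] {n : ℕ} (J : Set (Fin n)) :
    MvPolynomial (Fin n) k →ₐ[k] MvPolynomial ↥J k :=
  aeval (fun i => if h : i ∈ J then X (⟨i, h⟩ : ↥J) else 0)

variable (J : Set (Fin n))

theorem projJ_X_mem {i : Fin n} (h : i ∈ J) : projJ k J (X i) = X i := by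
  classical simp [projJ, h]

theorem projJ_X_notMem {i : Fin n} (h : i ∉ J) : projJ k J (X i) = 0 := by
  classical simp [projJ, h]

theorem inclJ_comp_projJ' : (inclJ k J).comp (projJ' k J) = projJ k J := by
  classical
  apply MvPolynomial.algHom_ext
  intro i
  by_cases h : i ∈ J <;>
    simp [projJ, projJ', inclJ, h]

theorem projJ_comp_inclJ : (projJ k J).comp (inclJ k J) = inclJ k J := by
  apply MvPolynomial.algHom_ext
  intro j
  simp [inclJ, projJ_X_mem J j.2]

theorem projJ_inclJ (b : MvPolynomial ↥J k) : projJ k J (inclJ k J b) = inclJ k J b := by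
  have := congrArg (fun φ => φ b) (projJ_comp_inclJ (k := k) J)
  simpa using this

theorem projJ_idem (a : MvPolynomial (Fin n) k) : projJ k J (projJ k J a) = projJ k J a := by
  have h : (projJ k J).comp (projJ k J) = projJ k J := by
    classical
    apply MvPolynomial.algHom_ext
    intro i
    by_cases h : i ∈ J <;> simp [projJ, h]
  have := congrArg (fun φ => φ a) h
  simpa using this

theorem exists_inclJ_eq {a : MvPolynomial (Fin n) k} (ha : projJ k J a = a) :
    ∃ b, inclJ k J b = a := by
  refine ⟨projJ' k J a, ?_⟩
  have := congrArg (fun φ => φ a) (inclJ_comp_projJ' (k := k) J)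
  simpa [ha] using this

theorem X_mem_cellMax {i : Fin n} (h : i ∉ J) : X i ∈ cellMax k J :=
  Ideal.subset_span ⟨i, h, rfl⟩

theorem sub_projJ_mem_cellMax (a : MvPolynomial (Fin n) k) :
    a - projJ k J a ∈ cellMax k J := by
  induction a using MvPolynomial.induction_on with
  | C c => simp [projJ]
  | add p q hp hq =>
    have : p + q - projJ k J (p + q) = (p - projJ k J p) + (q - projJ k J q) := by
      rw [map_add]; ring
    rw [this]; exact Ideal.add_mem _ hp hq
  | mul_X p i hp =>
    by_cases h : i ∈ J
    · have : p * X i - projJ k J (p * X i) = (p - projJ k J p) * X i := by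
        rw [map_mul, projJ_X_mem J h]; ring
      rw [this]; exact Ideal.mul_mem_right _ _ hp
    · have : p * X i - projJ k J (p * X i) = p * X i := by
        rw [map_mul, projJ_X_notMem J h]; ring
      rw [this]; exact Ideal.mul_mem_left _ _ (X_mem_cellMax J h)

theorem projJ_eq_zero_of_mem_cellMax {g : MvPolynomial (Fin n) k} (hg : g ∈ cellMax k J) :
    projJ k J g = 0 := by
  induction hg using Submodule.span_induction with
  | mem x hx => obtain ⟨i, hi, rfl⟩ := hx; exact projJ_X_notMem J hi
  | zero => simp
  | add x y hx hy ihx ihy => rw [map_add, ihx, ihy, add_zero]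
  | smul a x hx ih => rw [smul_eq_mul, map_mul, ih, mul_zero]

theorem cellMax_mul_mem {I : Ideal (MvPolynomial (Fin n) k)} {h : MvPolynomial (Fin n) k}
    (hkill : ∀ i ∉ J, X i * h ∈ I) {g : MvPolynomial (Fin n) k} (hg : g ∈ cellMax k J) :
    g * h ∈ I := by
  induction hg using Submodule.span_induction with
  | mem x hx => obtain ⟨i, hi, rfl⟩ := hx; exact hkill i hi
  | zero => simp
  | add x y hx hy ihx ihy => rw [add_mul]; exact Ideal.add_mem _ ihx ihy
  | smul a x hx ih => rw [smul_eq_mul, mul_assoc]; exact Ideal.mul_mem_left _ _ ih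

theorem projJ_mem_map {T : Ideal (MvPolynomial ↥J k)} {u : MvPolynomial (Fin n) k}
    (hu : u ∈ Ideal.map (inclJ k J) T) : projJ k J u ∈ Ideal.map (inclJ k J) T := by
  induction hu using Submodule.span_induction with
  | mem x hx =>
    obtain ⟨b, hb, rfl⟩ := hx
    rw [projJ_inclJ]
    exact Ideal.mem_map_of_mem _ hb
  | zero => simp
  | add x y hx hy ihx ihy => rw [map_add]; exact Ideal.add_mem _ ihx ihy
  | smul a x hx ih => rw [smul_eq_mul, map_mul]; exact Ideal.mul_mem_left _ _ ih


end Aux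

/-- For a `J`-cellular binomial ideal `I` and any monomial `m` in the
variables off `J` which is nonzero mod `I`, every associated prime of
`((I : m) ∩ k[J])·S + m_J` is an associated prime of `I`. -/
theorem stmt1 {k : Type*} [Field k] [IsAlgClosed k] [CharZero k] {n : ℕ}
    (J : Set (Fin n)) (I : Ideal (MvPolynomial (Fin n) k))
    (hbin : IsBinomialIdeal I) (hcell : IsCellular J I)
    (m : MvPolynomial (Fin n) k) (hm : IsMonomialOff J m) (hmI : m ∉ I)
    (P : Ideal (MvPolynomial (Fin n) k))
    (hP : IsAssociatedPrimeOf
      (Ideal.map (inclJ k J) (elimJ J (I.colon (Ideal.span {m}))) ⊔ cellMax k J) P) :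
    IsAssociatedPrimeOf I P := by
  classical
  obtain ⟨hPrime, f, hPf⟩ := hP
  set Q : Ideal (MvPolynomial (Fin n) k) :=
    Ideal.map (inclJ k J) (elimJ J (I.colon (Ideal.span {m}))) ⊔ cellMax k J with hQ
  -- Q ≤ P
  have hQP : Q ≤ P := by
    intro g hg
    rw [hPf, Ideal.mem_colon_span_singleton]
    exact Ideal.mul_mem_right _ _ hg
  have hcellQ : cellMax k J ≤ Q := le_sup_right
  have hcellP : cellMax k J ≤ P := le_trans hcellQ hQP
  -- characterization (C1): for projJ-fixed a, a ∈ Q ↔ a * m ∈ I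
  have C1 : ∀ a : MvPolynomial (Fin n) k, projJ k J a = a → (a ∈ Q ↔ a * m ∈ I) := by
    intro a ha
    constructor
    · intro haQ
      rw [hQ, Submodule.mem_sup] at haQ
      obtain ⟨u, hu, v, hv, huv⟩ := haQ
      have hpu : projJ k J u ∈ Ideal.map (inclJ k J) (elimJ J (I.colon (Ideal.span {m}))) :=
        projJ_mem_map J hu
      have hpu' : projJ k J u ∈ I.colon (Ideal.span {m}) := by
        have := Ideal.map_comap_le (f := inclJ k J) (K := I.colon (Ideal.span {m}))
        exact this hpu
      have haeq : a = projJ k J u := by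
        have := congrArg (projJ k J) huv
        rw [map_add, projJ_eq_zero_of_mem_cellMax J hv, add_zero] at this
        rw [← ha, ← this]
      rw [haeq]
      exact Ideal.mem_colon_span_singleton.mp hpu'
    · intro haI
      obtain ⟨b, hb⟩ := exists_inclJ_eq J ha
      have hbmem : b ∈ elimJ J (I.colon (Ideal.span {m})) := by
        show inclJ k J b ∈ I.colon (Ideal.span {m})
        rw [hb, Ideal.mem_colon_span_singleton]
        exact haI
      have : a ∈ Ideal.map (inclJ k J) (elimJ J (I.colon (Ideal.span {m}))) := by
        rw [← hb]; exact Ideal.mem_map_of_mem _ hbmem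
      exact Ideal.mem_sup_left this
  -- characterization (C2): for projJ-fixed a, a ∈ P ↔ a * (projJ f * m) ∈ I
  have C2 : ∀ a : MvPolynomial (Fin n) k, projJ k J a = a →
      (a * (projJ k J f * m) ∈ I ↔ a ∈ P) := by
    intro a ha
    have h1 : a ∈ P ↔ a * f ∈ Q := by rw [hPf, Ideal.mem_colon_span_singleton]
    have h2 : a * f ∈ Q ↔ a * projJ k J f ∈ Q := by
      have hdiff : a * f - a * projJ k J f ∈ Q := by
        have : a * f - a * projJ k J f = a * (f - projJ k J f) := by ring
        rw [this]
        exact hcellQ (Ideal.mul_mem_left _ _ (sub_projJ_mem_cellMax J f))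
      constructor
      · intro h; have := Ideal.sub_mem _ h hdiff; simpa using this
      · intro h; have := Ideal.add_mem _ h hdiff; simpa using this
    have hpure : projJ k J (a * projJ k J f) = a * projJ k J f := by
      rw [map_mul, ha, projJ_idem]
    have h3 := C1 (a * projJ k J f) hpure
    rw [h1, h2, h3, mul_assoc]
  -- the Good predicate
  set Good : MvPolynomial (Fin n) k → Prop :=
    fun h => ∀ a : MvPolynomial (Fin n) k, projJ k J a = a → (a * h ∈ I ↔ a ∈ P) with hGood
  have Goodξ : Good (projJ k J f * m) := fun a ha => C2 a ha
  have hone : projJ k J (1 : MvPolynomial (Fin n) k) = 1 := map_one _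
  -- descent step for a single variable
  have step : ∀ (i : Fin n), ∀ r : ℕ, ∀ h : MvPolynomial (Fin n) k,
      X i ^ r * h ∈ I → Good h →
      ∃ h', Good h' ∧ X i * h' ∈ I ∧
        (∀ g : MvPolynomial (Fin n) k, g * h ∈ I → g * h' ∈ I) := by
    intro i r
    induction r with
    | zero =>
      intro h hrh hGh
      exfalso
      rw [pow_zero, one_mul] at hrh
      have : (1 : MvPolynomial (Fin n) k) ∈ P := (hGh 1 hone).mp (by simpa using hrh)
      exact hPrime.ne_top ((Ideal.eq_top_iff_one P).mpr this)
    | succ r IH =>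
      intro h hrh hGh
      by_cases hz : ∀ a : MvPolynomial (Fin n) k, projJ k J a = a →
          a * (X i ^ r * h) ∈ I → a ∈ P
      · refine ⟨X i ^ r * h, ?_, ?_, ?_⟩
        · intro a ha
          constructor
          · exact hz a ha
          · intro haP
            have : a * h ∈ I := (hGh a ha).mpr haP
            have heq : a * (X i ^ r * h) = X i ^ r * (a * h) := by ring
            rw [heq]
            exact Ideal.mul_mem_left _ _ this
        · have heq : X i * (X i ^ r * h) = X i ^ (r + 1) * h := by ring
          rw [heq]; exact hrh
        · intro g hg
          have heq : g * (X i ^ r * h) = X i ^ r * (g * h) := by ring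
          rw [heq]; exact Ideal.mul_mem_left _ _ hg
      · push_neg at hz
        obtain ⟨d, hd_pure, hdz, hdP⟩ := hz
        have hGdh : Good (d * h) := by
          intro a ha
          have hadpure : projJ k J (a * d) = a * d := by rw [map_mul, ha, hd_pure]
          have h1 : a * (d * h) = (a * d) * h := by ring
          rw [h1, hGh (a * d) hadpure]
          constructor
          · intro hadP
            rcases hPrime.mem_or_mem hadP with h' | h'
            · exact h'
            · exact absurd h' hdP
          · intro haP; exact Ideal.mul_mem_right _ _ haP
        have hrdh : X i ^ r * (d * h) ∈ I := by
          have heq : X i ^ r * (d * h) = d * (X i ^ r * h) := by ring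
          rw [heq]; exact hdz
        obtain ⟨h', hG', hX', htrans'⟩ := IH (d * h) hrdh hGdh
        refine ⟨h', hG', hX', ?_⟩
        intro g hg
        apply htrans'
        have heq : g * (d * h) = d * (g * h) := by ring
        rw [heq]; exact Ideal.mul_mem_left _ _ hg
  -- process all off-J variables
  have main : ∀ T : Finset (Fin n), ∃ h, Good h ∧ ∀ i ∈ T, i ∉ J → X i * h ∈ I := by
    intro T
    induction T using Finset.induction_on with
    | empty => exact ⟨projJ k J f * m, Goodξ, by simp⟩
    | @insert a T haT IH =>
      obtain ⟨h, hGh, hT⟩ := IH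
      by_cases haJ : a ∈ J
      · refine ⟨h, hGh, ?_⟩
        intro i hi hiJ
        rcases Finset.mem_insert.mp hi with rfl | hi'
        · exact absurd haJ hiJ
        · exact hT i hi' hiJ
      · obtain ⟨d, hd⟩ := hcell.2 a haJ
        have hdh : X a ^ d * h ∈ I := Ideal.mul_mem_right _ _ hd
        obtain ⟨h', hG', hXa', htrans⟩ := step a d h hdh hGh
        refine ⟨h', hG', ?_⟩
        intro i hi hiJ
        rcases Finset.mem_insert.mp hi with rfl | hi'
        · exact hXa'
        · exact htrans _ (hT i hi' hiJ)
  obtain ⟨h, hGh, hkills⟩ := main Finset.univ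
  have hkill : ∀ i ∉ J, X i * h ∈ I := fun i hi => hkills i (Finset.mem_univ i) hi
  refine ⟨hPrime, h, ?_⟩
  ext g
  rw [Ideal.mem_colon_span_singleton]
  constructor
  · intro hgP
    have h1 : (g - projJ k J g) * h ∈ I :=
      cellMax_mul_mem J hkill (sub_projJ_mem_cellMax J g)
    have hpgP : projJ k J g ∈ P := by
      have : g - projJ k J g ∈ P := hcellP (sub_projJ_mem_cellMax J g)
      have := Ideal.sub_mem _ hgP this
      simpa using this
    have h2 : projJ k J g * h ∈ I := (hGh (projJ k J g) (projJ_idem J g)).mpr hpgP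
    have heq : g * h = projJ k J g * h + (g - projJ k J g) * h := by ring
    rw [heq]; exact Ideal.add_mem _ h2 h1
  · intro hgh
    have h1 : (g - projJ k J g) * h ∈ I :=
      cellMax_mul_mem J hkill (sub_projJ_mem_cellMax J g)
    have h2 : projJ k J g * h ∈ I := by
      have heq : projJ k J g * h = g * h - (g - projJ k J g) * h := by ring
      rw [heq]; exact Ideal.sub_mem _ hgh h1
    have hpgP : projJ k J g ∈ P := (hGh (projJ k J g) (projJ_idem J g)).mp h2
    have : g - projJ k J g ∈ P := hcellP (sub_projJ_mem_cellMax J g)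
    have := Ideal.add_mem _ hpgP this
    simpa using this
end

section
/- Let k be an algebraically closed field and S = k[x_1,...,x_n]. Every minimal prime of a binomial ideal I ⊆ S is a binomial ideal. -/
open MvPolynomial

namespace Stmt5Aux

variable {n : ℕ}

noncomputable def toZ {n : ℕ} : (Fin n →₀ ℕ) →+ (Fin n →₀ ℤ) :=
  Finsupp.mapRange.addMonoidHom (Nat.castAddMonoidHom ℤ)

lemma toZ_apply (u : Fin n →₀ ℕ) (i : Fin n) : toZ u i = (u i : ℤ) := by
  simp [toZ, Finsupp.mapRange.addMonoidHom, Finsupp.mapRange_apply]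
  rfl

lemma ipp_apply (w : Fin n →₀ ℤ) (i : Fin n) : intPosPart w i = (w i).toNat :=
  Finsupp.mapRange_apply

lemma toZ_ipp_sub (w : Fin n →₀ ℤ) : toZ (intPosPart w) - toZ (intPosPart (-w)) = w := by
  ext i
  simp only [Finsupp.coe_sub, Pi.sub_apply, toZ_apply, ipp_apply, Finsupp.coe_neg, Pi.neg_apply]
  omega

lemma exists_split (u v : Fin n →₀ ℕ) :
    ∃ c : Fin n →₀ ℕ, u = intPosPart (toZ u - toZ v) + c ∧
      v = intPosPart (-(toZ u - toZ v)) + c := by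
  refine ⟨Finsupp.zipWith min rfl u v, ?_, ?_⟩ <;> ext i <;>
    simp only [Finsupp.add_apply, Finsupp.zipWith_apply, ipp_apply, Finsupp.coe_sub,
      Pi.sub_apply, toZ_apply, Finsupp.coe_neg, Pi.neg_apply] <;> omega

lemma ipp_support {w : Fin n →₀ ℤ} {i : Fin n} (h : intPosPart w i ≠ 0) : w i ≠ 0 := by
  rw [ipp_apply] at h; omega

lemma ipp_nsmul (m : ℕ) (w : Fin n →₀ ℤ) : intPosPart ((m : ℤ) • w) = m • intPosPart w := by
  ext i
  simp only [ipp_apply, Finsupp.smul_apply, smul_eq_mul]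
  rcases le_or_gt 0 (w i) with h | h
  · obtain ⟨a, ha⟩ := Int.le.dest h
    rw [zero_add] at ha
    rw [← ha, ← Nat.cast_mul, Int.toNat_natCast, Int.toNat_natCast]
  · rw [Int.toNat_of_nonpos h.le,
      Int.toNat_of_nonpos (mul_nonpos_of_nonneg_of_nonpos (by positivity) h.le), mul_zero]

end Stmt5Aux

namespace Stmt5Aux

section Psec

variable {k : Type*} [Field k] {n : ℕ} (P : Ideal (MvPolynomial (Fin n) k))

lemma monomial_notMem (hP : P.IsPrime) {u : Fin n →₀ ℕ}
    (hu : ∀ i, u i ≠ 0 → (X i : MvPolynomial (Fin n) k) ∉ P) {c : k} (hc : c ≠ 0) :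
    monomial u c ∉ P := by
  intro hmem
  have h1 : (monomial u (1 : k)) ∈ P := by
    have := P.mul_mem_left (C c⁻¹) hmem
    rwa [C_mul_monomial, inv_mul_cancel₀ hc] at this
  rw [monomial_eq, C_1, one_mul] at h1
  -- now a product over the support is in P
  have : ∀ s : Finset (Fin n), (∏ i ∈ s, (X i : MvPolynomial (Fin n) k) ^ u i) ∈ P →
      ∃ i ∈ s, u i ≠ 0 ∧ (X i : MvPolynomial (Fin n) k) ∈ P := by
    intro s
    induction s using Finset.induction with
    | empty =>
      intro h; simp only [Finset.prod_empty] at h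
      exact absurd ((Ideal.eq_top_iff_one P).2 h) hP.ne_top
    | insert _ _ hx ih =>
      rename_i a s'
      intro h
      rw [Finset.prod_insert hx] at h
      rcases hP.mem_or_mem h with h' | h'
      · rcases Nat.eq_zero_or_pos (u a) with h0 | h0
        · rw [h0, pow_zero] at h'
          exact absurd ((Ideal.eq_top_iff_one P).2 h') hP.ne_top
        · have : (X a : MvPolynomial (Fin n) k) ∈ P := by
            have := hP.mem_of_pow_mem _ h'
            exact this
          exact ⟨a, Finset.mem_insert_self _ _, by omega, this⟩
      · obtain ⟨i, hi, h2, h3⟩ := ih h'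
        exact ⟨i, Finset.mem_insert_of_mem hi, h2, h3⟩
  have h2 : (Finsupp.prod u fun i e => (X i : MvPolynomial (Fin n) k) ^ e) =
      ∏ i ∈ u.support, (X i : MvPolynomial (Fin n) k) ^ u i := rfl
  rw [h2] at h1
  obtain ⟨i, _, h3, h4⟩ := this _ h1
  exact hu i h3 h4

/-- `w` is in the lattice of `P`. -/
def inL (w : Fin n →₀ ℤ) : Prop :=
  (∀ i, w i ≠ 0 → (X i : MvPolynomial (Fin n) k) ∉ P) ∧
  ∃ a : k, a ≠ 0 ∧ monomial (intPosPart w) 1 - monomial (intPosPart (-w)) a ∈ P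

open Classical in
noncomputable def rho (w : Fin n →₀ ℤ) : k :=
  if h : inL P w then h.2.choose else 1

lemma rho_spec {w : Fin n →₀ ℤ} (h : inL P w) :
    rho P w ≠ 0 ∧ monomial (intPosPart w) 1 - monomial (intPosPart (-w)) (rho P w) ∈ P := by
  classical
  rw [rho, dif_pos h]
  exact ⟨h.2.choose_spec.1, h.2.choose_spec.2⟩

lemma rho_unique (hP : P.IsPrime) {w : Fin n →₀ ℤ} (h : inL P w) {a : k}
    (ha : monomial (intPosPart w) 1 - monomial (intPosPart (-w)) a ∈ P) : a = rho P w := by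
  have h2 := rho_spec P h
  have hsub : (monomial (intPosPart (-w))) (a - rho P w) ∈ P := by
    have := P.sub_mem h2.2 ha
    have e : (monomial (intPosPart w) 1 - monomial (intPosPart (-w)) (rho P w)) -
        (monomial (intPosPart w) 1 - monomial (intPosPart (-w)) a) =
        monomial (intPosPart (-w)) (a - rho P w) := by
      rw [map_sub]; ring
    rwa [e] at this
  by_contra hne
  exact monomial_notMem P hP
    (fun i hi => h.1 i (by have := ipp_support hi; simpa using this))
    (sub_ne_zero.mpr hne) hsub

lemma key1 (hP : P.IsPrime) {u v : Fin n →₀ ℕ} {a : k} (ha : a ≠ 0)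
    (hu : ∀ i, u i ≠ 0 → (X i : MvPolynomial (Fin n) k) ∉ P)
    (hv : ∀ i, v i ≠ 0 → (X i : MvPolynomial (Fin n) k) ∉ P)
    (hmem : monomial u (1 : k) - monomial v a ∈ P) :
    inL P (toZ u - toZ v) ∧ rho P (toZ u - toZ v) = a ∧
      ∃ c : Fin n →₀ ℕ, monomial u (1 : k) - monomial v a =
        monomial c 1 * (monomial (intPosPart (toZ u - toZ v)) 1 -
          monomial (intPosPart (-(toZ u - toZ v))) a) := by
  obtain ⟨c, hc1, hc2⟩ := exists_split u v
  set w := toZ u - toZ v with hw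
  have heq : monomial u (1 : k) - monomial v a =
      monomial c 1 * (monomial (intPosPart w) 1 - monomial (intPosPart (-w)) a) := by
    rw [mul_sub, monomial_mul, monomial_mul, one_mul, one_mul]
    rw [hc1, hc2]; rw [add_comm c (intPosPart w), add_comm c (intPosPart (-w))]
  have hcP : (monomial c (1 : k)) ∉ P :=
    monomial_notMem P hP (fun i hi => hu i (by rw [hc1]; simp; omega)) one_ne_zero
  have hgen : monomial (intPosPart w) (1 : k) - monomial (intPosPart (-w)) a ∈ P := by
    rw [heq] at hmem
    rcases hP.mem_or_mem hmem with h | h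
    · exact absurd h hcP
    · exact h
  have hsupp : ∀ i, w i ≠ 0 → (X i : MvPolynomial (Fin n) k) ∉ P := by
    intro i hi
    rw [hw] at hi
    simp only [Finsupp.coe_sub, Pi.sub_apply, toZ_apply] at hi
    rcases Nat.eq_zero_or_pos (u i) with h0 | h0
    · exact hv i (by omega)
    · exact hu i (by omega)
  have hL : inL P w := ⟨hsupp, a, ha, hgen⟩
  exact ⟨hL, (rho_unique P hP hL hgen).symm, c, heq⟩

lemma inL_zero : inL P 0 := by
  refine ⟨fun i h => absurd rfl h, 1, one_ne_zero, ?_⟩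
  have : intPosPart (0 : Fin n →₀ ℤ) = 0 := by ext i; simp [ipp_apply]
  rw [neg_zero, this]
  simp

lemma inL_neg (hP : P.IsPrime) {w : Fin n →₀ ℤ} (h : inL P w) : inL P (-w) := by
  obtain ⟨hs, a, ha, hmem⟩ := h
  refine ⟨fun i hi => hs i (by simpa using hi), a⁻¹, inv_ne_zero ha, ?_⟩
  have hsm := P.mul_mem_left (C (-a⁻¹)) hmem
  rw [← smul_eq_C_mul] at hsm
  rw [neg_neg]
  have e : (-a⁻¹) • ((monomial (intPosPart w)) (1:k) - (monomial (intPosPart (-w))) a) =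
      monomial (intPosPart (-w)) 1 - monomial (intPosPart w) a⁻¹ := by
    rw [smul_sub, smul_monomial, smul_monomial]
    rw [smul_eq_mul, smul_eq_mul, mul_one, neg_mul, inv_mul_cancel₀ ha]
    rw [map_neg]
    ring_nf
    rw [map_neg]
    ring
  rwa [e] at hsm

lemma inL_add (hP : P.IsPrime) {a b : Fin n →₀ ℤ} (ha : inL P a) (hb : inL P b) :
    inL P (a + b) ∧ rho P (a + b) = rho P a * rho P b := by
  obtain ⟨hsa, hmema⟩ := rho_spec P ha
  obtain ⟨hsb, hmemb⟩ := rho_spec P hb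
  set α := rho P a; set β := rho P b
  have key : monomial (intPosPart a + intPosPart b) (1:k) -
      monomial (intPosPart (-a) + intPosPart (-b)) (α * β) =
      monomial (intPosPart a) 1 * (monomial (intPosPart b) 1 - monomial (intPosPart (-b)) β) +
      β • (monomial (intPosPart (-b)) 1 *
        (monomial (intPosPart a) 1 - monomial (intPosPart (-a)) α)) := by
    rw [mul_sub, mul_sub, smul_sub, monomial_mul, monomial_mul, monomial_mul, monomial_mul,
      smul_monomial, smul_monomial]
    rw [add_comm (intPosPart (-b)) (intPosPart a), add_comm (intPosPart (-b)) (intPosPart (-a))]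
    simp only [smul_eq_mul, mul_one, one_mul]
    rw [mul_comm β α]
    abel
  have hmem : monomial (intPosPart a + intPosPart b) (1:k) -
      monomial (intPosPart (-a) + intPosPart (-b)) (α * β) ∈ P := by
    rw [key, smul_eq_C_mul]
    exact P.add_mem (P.mul_mem_left _ hmemb) (P.mul_mem_left _ (P.mul_mem_left _ hmema))
  have htz : toZ (intPosPart a + intPosPart b) - toZ (intPosPart (-a) + intPosPart (-b)) =
      a + b := by
    rw [map_add, map_add,
      show ∀ p q r s : Fin n →₀ ℤ, p + q - (r + s) = (p - r) + (q - s) from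
        fun _ _ _ _ => by abel,
      toZ_ipp_sub, toZ_ipp_sub]
  have hu : ∀ i, (intPosPart a + intPosPart b) i ≠ 0 →
      (X i : MvPolynomial (Fin n) k) ∉ P := by
    intro i hi
    simp only [Finsupp.add_apply] at hi
    rcases Nat.eq_zero_or_pos (intPosPart a i) with h0 | h0
    · exact hb.1 i (ipp_support (by omega))
    · exact ha.1 i (ipp_support (by omega))
  have hv : ∀ i, (intPosPart (-a) + intPosPart (-b)) i ≠ 0 →
      (X i : MvPolynomial (Fin n) k) ∉ P := by
    intro i hi
    simp only [Finsupp.add_apply] at hi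
    rcases Nat.eq_zero_or_pos (intPosPart (-a) i) with h0 | h0
    · exact hb.1 i (by have := ipp_support (w := -b) (i := i) (by omega); simpa using this)
    · exact ha.1 i (by have := ipp_support (w := -a) (i := i) (by omega); simpa using this)
  obtain ⟨hL, hrho, _⟩ := key1 P hP (mul_ne_zero hsa hsb) hu hv hmem
  rw [htz] at hL hrho
  exact ⟨hL, hrho⟩

set_option synthInstance.maxHeartbeats 800000 in
set_option maxHeartbeats 1600000 in
lemma inL_sat_aux [IsAlgClosed k] (hP : P.IsPrime) {m : ℕ} (hm : m ≠ 0)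
    {w : Fin n →₀ ℤ} (h : inL P ((m : ℤ) • w)) : inL P w := by
  have hw : ∀ i, w i ≠ 0 → (X i : MvPolynomial (Fin n) k) ∉ P := by
    intro i hi
    refine h.1 i ?_
    simp only [Finsupp.smul_apply, smul_eq_mul]
    have : (m : ℤ) ≠ 0 := by exact_mod_cast hm
    exact mul_ne_zero this hi
  obtain ⟨-, μ, hμ0, hμmem⟩ := h
  rw [ipp_nsmul, show -((m : ℤ) • w) = (m : ℤ) • (-w) by rw [smul_neg], ipp_nsmul] at hμmem
  set A : MvPolynomial (Fin n) k := monomial (intPosPart w) 1 with hA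
  set B : MvPolynomial (Fin n) k := monomial (intPosPart (-w)) 1 with hB
  have hμmem' : A ^ m - C μ * B ^ m ∈ P := by
    rw [hA, hB, monomial_pow, monomial_pow, one_pow, C_mul_monomial, mul_one]
    exact hμmem
  haveI : P.IsPrime := hP
  set F := FractionRing (MvPolynomial (Fin n) k ⧸ P)
  set θ : MvPolynomial (Fin n) k →+* F :=
    ((algebraMap (MvPolynomial (Fin n) k ⧸ P) F).comp (Ideal.Quotient.mk P)) with hθ
  have hker : ∀ x, θ x = 0 ↔ x ∈ P := by
    intro x
    rw [hθ, RingHom.comp_apply, IsFractionRing.to_map_eq_zero_iff,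
      Ideal.Quotient.eq_zero_iff_mem]
  have hBne : θ B ≠ 0 := by
    intro h0
    exact monomial_notMem P hP
      (fun i hi => hw i (by have := ipp_support hi; simpa using this)) one_ne_zero
      ((hker B).1 h0)
  have hAne : θ A ≠ 0 := by
    intro h0
    exact monomial_notMem P hP (fun i hi => hw i (ipp_support hi)) one_ne_zero
      ((hker A).1 h0)
  have hrel : θ A ^ m = θ (C μ) * θ B ^ m := by
    have h0 := (hker _).2 hμmem'
    rw [map_sub, map_mul, map_pow, map_pow, sub_eq_zero] at h0
    exact h0
  set t : F := θ A / θ B with ht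
  have htm : t ^ m = θ (C μ) := by
    rw [ht, div_pow, hrel, mul_div_assoc, div_self (pow_ne_zero _ hBne), mul_one]
  set q : Polynomial k := Polynomial.X ^ m - Polynomial.C μ with hq
  have hqm : q.Monic := Polynomial.monic_X_pow_sub_C μ hm
  have hsp := (IsAlgClosed.splits q).eq_prod_roots_of_monic hqm
  have h0 : Polynomial.eval₂ (θ.comp C) t q = 0 := by
    rw [hq, Polynomial.eval₂_sub, Polynomial.eval₂_pow, Polynomial.eval₂_X, Polynomial.eval₂_C,
      RingHom.comp_apply, htm, sub_self]
  rw [hsp] at h0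
  rw [show Polynomial.eval₂ (θ.comp C) t
        ((Multiset.map (fun a => Polynomial.X - Polynomial.C a) q.roots).prod) =
      ((Multiset.map (fun a => Polynomial.X - Polynomial.C a) q.roots).map
        (Polynomial.eval₂RingHom (θ.comp C) t)).prod from
    (map_multiset_prod (Polynomial.eval₂RingHom (θ.comp C) t) _)] at h0
  have hp := Multiset.prod_eq_zero_iff.mp h0
  rw [Multiset.mem_map] at hp
  obtain ⟨p', hp', hp0⟩ := hp
  rw [Multiset.mem_map] at hp'
  obtain ⟨r, hr, rfl⟩ := hp'
  rw [Polynomial.coe_eval₂RingHom, Polynomial.eval₂_sub, Polynomial.eval₂_X, Polynomial.eval₂_C]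
    at hp0
  rw [sub_eq_zero] at hp0
  -- hp0 : t = (θ.comp C) r
  have htne : t ≠ 0 := div_ne_zero hAne hBne
  have hrne : r ≠ 0 := by
    intro h0
    rw [h0] at hp0
    simp only [map_zero] at hp0
    exact htne hp0
  have hfin : θ (A - C r * B) = 0 := by
    rw [map_sub, map_mul, sub_eq_zero]
    have : θ A = t * θ B := by rw [ht, div_mul_cancel₀ _ hBne]
    rw [this, hp0, RingHom.comp_apply]
  have hmem2 : A - C r * B ∈ P := (hker _).1 hfin
  refine ⟨hw, r, hrne, ?_⟩
  rw [hA, hB, C_mul_monomial, mul_one] at hmem2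
  exact hmem2

lemma inL_sat [IsAlgClosed k] (hP : P.IsPrime) {d : ℤ} (hd : d ≠ 0)
    {w : Fin n →₀ ℤ} (h : inL P (d • w)) : inL P w := by
  rcases lt_or_gt_of_ne hd with hneg | hpos
  · have h' : inL P (((-d).toNat : ℤ) • w) := by
      have := inL_neg P hP h
      rw [← neg_smul] at this
      rwa [Int.toNat_of_nonneg (by omega)]
    exact inL_sat_aux P hP (by omega) h'
  · have h' : inL P ((d.toNat : ℤ) • w) := by
      rwa [Int.toNat_of_nonneg (by omega)]
    exact inL_sat_aux P hP (by omega) h'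

end Psec

section Ker

variable {k : Type*} [Field k] {n : ℕ} {G : Type*} [AddCommGroup G]
variable (E : Fin n → Prop) [DecidablePred E] (φ : (Fin n →₀ ℤ) →+ G) (ρt : (Fin n →₀ ℤ) → k)

/-- The generating set: lattice binomials plus the variables in `E`. -/
def gens : Set (MvPolynomial (Fin n) k) :=
  {f | (∃ w : Fin n →₀ ℤ, φ w = 0 ∧
      f = monomial (intPosPart w) 1 - monomial (intPosPart (-w)) (ρt w)) ∨
    (∃ i, E i ∧ f = X i)}

noncomputable def psi : MvPolynomial (Fin n) k →+* AddMonoidAlgebra k G :=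
  eval₂Hom (algebraMap k (AddMonoidAlgebra k G))
    (fun i => if E i then 0 else
      AddMonoidAlgebra.single (φ (toZ (Finsupp.single i 1))) (ρt (toZ (Finsupp.single i 1))))

variable (hmul : ∀ u v : Fin n →₀ ℤ, ρt (u + v) = ρt u * ρt v) (hne : ∀ u, ρt u ≠ 0)

section rt
include hmul hne

lemma rt_zero : ρt 0 = 1 := by
  have h := hmul 0 0
  rw [add_zero] at h
  exact (mul_left_cancel₀ (hne 0) (by rw [mul_one, ← h])).symm

lemma rt_sum {α : Type*} (s : Finset α) (v : α → (Fin n →₀ ℤ)) :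
    ρt (∑ i ∈ s, v i) = ∏ i ∈ s, ρt (v i) := by
  classical
  induction s using Finset.induction with
  | empty => simpa using rt_zero ρt hmul hne
  | insert _ _ hx ih => rename_i a s' ; rw [Finset.sum_insert hx, Finset.prod_insert hx, hmul, ih]

lemma rt_nsmul (m : ℕ) (u : Fin n →₀ ℤ) : ρt (m • u) = ρt u ^ m := by
  induction m with
  | zero => simpa using rt_zero ρt hmul hne
  | succ m ih => rw [succ_nsmul, hmul, ih, pow_succ]

end rt

lemma toZ_decomp (u : Fin n →₀ ℕ) :
    toZ u = ∑ i ∈ u.support, (u i) • toZ (Finsupp.single i 1) := by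
  have h1 : u = ∑ i ∈ u.support, Finsupp.single i (u i) := (Finsupp.sum_single u).symm
  conv_lhs => rw [h1]
  rw [map_sum]
  refine Finset.sum_congr rfl fun i _ => ?_
  rw [← map_nsmul]
  congr 1
  rw [Finsupp.smul_single]
  congr 1
  simp

include hmul hne in
lemma psi_monomial (u : Fin n →₀ ℕ) (c : k) :
    psi E φ ρt (monomial u c) =
      if ∀ i ∈ u.support, ¬ E i then
        AddMonoidAlgebra.single (φ (toZ u)) (c * ρt (toZ u)) else 0 := by
  have hev : psi E φ ρt (monomial u c) = (algebraMap k (AddMonoidAlgebra k G)) c *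
      u.prod fun i e => (if E i then (0 : AddMonoidAlgebra k G) else
        AddMonoidAlgebra.single (φ (toZ (Finsupp.single i 1)))
          (ρt (toZ (Finsupp.single i 1)))) ^ e := by
    rw [psi]
    exact eval₂_monomial _ _
  by_cases hcase : ∀ i ∈ u.support, ¬ E i
  · rw [if_pos hcase, hev]
    have hprod : (u.prod fun i e => (if E i then (0 : AddMonoidAlgebra k G) else
        AddMonoidAlgebra.single (φ (toZ (Finsupp.single i 1)))
          (ρt (toZ (Finsupp.single i 1)))) ^ e) =
        ∏ i ∈ u.support, AddMonoidAlgebra.single ((u i) • φ (toZ (Finsupp.single i 1)))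
          (ρt (toZ (Finsupp.single i 1)) ^ (u i)) := by
      rw [Finsupp.prod]
      refine Finset.prod_congr rfl fun i hi => ?_
      rw [if_neg (hcase i hi), AddMonoidAlgebra.single_pow]
    rw [hprod, AddMonoidAlgebra.prod_single]
    have h1 : (∑ i ∈ u.support, (u i) • φ (toZ (Finsupp.single i 1))) = φ (toZ u) := by
      rw [toZ_decomp, map_sum]
      exact Finset.sum_congr rfl fun i _ => (map_nsmul φ _ _).symm
    have h2 : (∏ i ∈ u.support, ρt (toZ (Finsupp.single i 1)) ^ (u i)) = ρt (toZ u) := by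
      rw [toZ_decomp, rt_sum ρt hmul hne]
      exact Finset.prod_congr rfl fun i _ => (rt_nsmul ρt hmul hne _ _).symm
    rw [h1, h2, AddMonoidAlgebra.coe_algebraMap]
    simp only [Function.comp_apply, Algebra.algebraMap_self, RingHom.id_apply]
    rw [AddMonoidAlgebra.single_mul_single, zero_add]
  · rw [if_neg hcase, hev]
    push_neg at hcase
    obtain ⟨i, hi, hEi⟩ := hcase
    have : (u.prod fun i e => (if E i then (0 : AddMonoidAlgebra k G) else
        AddMonoidAlgebra.single (φ (toZ (Finsupp.single i 1)))
          (ρt (toZ (Finsupp.single i 1)))) ^ e) = 0 := by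
      rw [Finsupp.prod]
      refine Finset.prod_eq_zero hi ?_
      rw [if_pos hEi, zero_pow (Finsupp.mem_support_iff.mp hi)]
    rw [this, mul_zero]

variable (hE : ∀ w : Fin n →₀ ℤ, φ w = 0 → ∀ i, w i ≠ 0 → ¬ E i)

include hmul hne hE in
lemma psi_gens_zero {f : MvPolynomial (Fin n) k} (hf : f ∈ gens E φ ρt) :
    psi E φ ρt f = 0 := by
  rcases hf with ⟨w, hw, rfl⟩ | ⟨i, hEi, rfl⟩
  · rw [map_sub, psi_monomial E φ ρt hmul hne, psi_monomial E φ ρt hmul hne,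
      if_pos (fun i hi => hE w hw i (ipp_support (Finsupp.mem_support_iff.mp hi))),
      if_pos (fun i hi => hE w hw i (by
        have := ipp_support (Finsupp.mem_support_iff.mp hi); simpa using this))]
    have e1 : toZ (intPosPart w) = w + toZ (intPosPart (-w)) :=
      sub_eq_iff_eq_add.mp (toZ_ipp_sub w)
    rw [e1, map_add, hw, zero_add, hmul, one_mul]
    exact sub_self _
  · have : psi E φ ρt (X i) = (if E i then 0 else
        AddMonoidAlgebra.single (φ (toZ (Finsupp.single i 1)))
          (ρt (toZ (Finsupp.single i 1)))) := eval₂_X _ _ i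
    rw [this, if_pos hEi]

include hmul hne hE in
lemma ker_le_span :
    RingHom.ker (psi E φ ρt) ≤ Ideal.span (gens E φ ρt) := by
  classical
  suffices h : ∀ (N : ℕ) (f : MvPolynomial (Fin n) k), f.support.card ≤ N →
      psi E φ ρt f = 0 → f ∈ Ideal.span (gens E φ ρt) by
    intro f hf
    rw [RingHom.mem_ker] at hf
    exact h f.support.card f le_rfl hf
  intro N
  induction N with
  | zero =>
    intro f hcard _
    have : f.support = ∅ := Finset.card_eq_zero.mp (Nat.le_zero.mp hcard)
    rw [MvPolynomial.support_eq_empty.mp this]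
    exact Ideal.zero_mem _
  | succ N ih =>
    intro f hcard hker
    by_cases hf0 : f = 0
    · rw [hf0]; exact Ideal.zero_mem _
    obtain ⟨u₀, hu₀⟩ := MvPolynomial.support_nonempty.mpr hf0
    by_cases hgood : ∀ i ∈ u₀.support, ¬ E i
    · -- u₀ is off E
      by_cases hex : ∃ u₁ ∈ f.support, u₁ ≠ u₀ ∧ (∀ i ∈ u₁.support, ¬ E i) ∧
          φ (toZ u₁) = φ (toZ u₀)
      · obtain ⟨u₁, hu₁, hne10, hgood1, hφ⟩ := hex
        set w := toZ u₁ - toZ u₀ with hwdef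
        have hφw : φ w = 0 := by rw [hwdef, map_sub, hφ, sub_self]
        obtain ⟨c, hc1, hc2⟩ := exists_split u₁ u₀
        set g : MvPolynomial (Fin n) k :=
          monomial (intPosPart w) 1 - monomial (intPosPart (-w)) (ρt w) with hg
        have hgmem : g ∈ gens E φ ρt := Or.inl ⟨w, hφw, rfl⟩
        set β : MvPolynomial (Fin n) k := monomial c (coeff u₁ f) * g with hβ
        have hβspan : β ∈ Ideal.span (gens E φ ρt) :=
          Ideal.mul_mem_left _ _ (Ideal.subset_span hgmem)
        have hβker : psi E φ ρt β = 0 := by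
          rw [hβ, map_mul, psi_gens_zero E φ ρt hmul hne hE hgmem, mul_zero]
        have hβeq : β = monomial u₁ (coeff u₁ f) -
            monomial u₀ (coeff u₁ f * ρt w) := by
          have e1 : c + intPosPart (toZ u₁ - toZ u₀) = u₁ := by
            rw [add_comm]; exact hc1.symm
          have e2 : c + intPosPart (-(toZ u₁ - toZ u₀)) = u₀ := by
            rw [add_comm]; exact hc2.symm
          rw [hβ, hg, mul_sub, monomial_mul, monomial_mul, mul_one, hwdef, e1, e2]
        set f' := f - β with hf'
        have hker' : psi E φ ρt f' = 0 := by rw [hf', map_sub, hker, hβker, sub_self]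
        have hsupp' : f'.support ⊆ f.support.erase u₁ := by
          intro v hv
          rw [MvPolynomial.mem_support_iff] at hv
          rw [hf', hβeq] at hv
          rw [coeff_sub, coeff_sub, coeff_monomial, coeff_monomial] at hv
          rcases eq_or_ne v u₁ with rfl | hvne
          · rw [if_pos rfl, if_neg (fun h => hne10 h.symm)] at hv
            simp at hv
          · refine Finset.mem_erase.mpr ⟨hvne, ?_⟩
            by_contra hns
            have h0 : coeff v f = 0 := MvPolynomial.notMem_support_iff.mp hns
            rw [h0, if_neg (fun h => hvne h.symm)] at hv
            rcases eq_or_ne u₀ v with rfl | hvne0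
            · exact (MvPolynomial.mem_support_iff.mp hu₀) h0
            · rw [if_neg hvne0] at hv
              simp at hv
        have hcard' : f'.support.card ≤ N := by
          have h1 := Finset.card_le_card hsupp'
          have h2 : (f.support.erase u₁).card < f.support.card :=
            Finset.card_erase_lt_of_mem hu₁
          omega
        have hmem' := ih f' hcard' hker'
        have : f = f' + β := by rw [hf']; ring
        rw [this]
        exact Ideal.add_mem _ hmem' hβspan
      · -- contradiction: coefficient of ψ f at φ (toZ u₀) is nonzero
        exfalso
        push_neg at hex
        set g₀ := φ (toZ u₀) with hg₀
        have hsum : psi E φ ρt f =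
            ∑ u ∈ f.support, psi E φ ρt (monomial u (coeff u f)) := by
          rw [← map_sum]
          congr 1
          exact (support_sum_monomial_coeff f).symm
        have hval : (0 : k) =
            ∑ u ∈ f.support,
              ((Finsupp.applyAddHom (M := k) g₀).comp AddMonoidAlgebra.coeffAddEquiv.toAddMonoidHom) (psi E φ ρt (monomial u (coeff u f))) := by
          have h1 : ((Finsupp.applyAddHom (M := k) g₀).comp AddMonoidAlgebra.coeffAddEquiv.toAddMonoidHom) (psi E φ ρt f) = 0 := by rw [hker]; rfl
          rw [hsum, map_sum] at h1
          exact h1.symm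
        have hterm : ∀ u ∈ f.support, u ≠ u₀ →
            ((Finsupp.applyAddHom (M := k) g₀).comp AddMonoidAlgebra.coeffAddEquiv.toAddMonoidHom) (psi E φ ρt (monomial u (coeff u f))) = 0 := by
          intro u hu hneq
          rw [psi_monomial E φ ρt hmul hne]
          by_cases hg : ∀ i ∈ u.support, ¬ E i
          · rw [if_pos hg]
            have hne2 : φ (toZ u) ≠ g₀ := fun h => hex u hu hneq hg h
            show (Finsupp.single (φ (toZ u)) _ : G →₀ k) g₀ = 0
            rw [Finsupp.single_apply, if_neg hne2]
          · rw [if_neg hg]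
            rfl
        rw [Finset.sum_eq_single_of_mem u₀ hu₀ hterm] at hval
        rw [psi_monomial E φ ρt hmul hne, if_pos hgood] at hval
        have : ((Finsupp.applyAddHom (M := k) g₀).comp AddMonoidAlgebra.coeffAddEquiv.toAddMonoidHom)
            (AddMonoidAlgebra.single (φ (toZ u₀)) (coeff u₀ f * ρt (toZ u₀))) =
            coeff u₀ f * ρt (toZ u₀) := by
          show (Finsupp.single (φ (toZ u₀)) (coeff u₀ f * ρt (toZ u₀)) : G →₀ k) g₀ = _
          rw [Finsupp.single_apply, if_pos rfl]
        rw [this] at hval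
        exact (mul_ne_zero (MvPolynomial.mem_support_iff.mp hu₀) (hne _)) hval.symm
    · -- u₀ touches E
      push_neg at hgood
      obtain ⟨i₀, hi₀supp, hEi₀⟩ := hgood
      have hu₀i₀ : u₀ i₀ ≠ 0 := Finsupp.mem_support_iff.mp hi₀supp
      set β : MvPolynomial (Fin n) k := monomial u₀ (coeff u₀ f) with hβ
      have hβspan : β ∈ Ideal.span (gens E φ ρt) := by
        have hXmem : (X i₀ : MvPolynomial (Fin n) k) ∈ gens E φ ρt :=
          Or.inr ⟨i₀, hEi₀, rfl⟩
        have hidx : u₀ - Finsupp.single i₀ 1 + Finsupp.single i₀ 1 = u₀ := by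
          ext j
          simp only [Finsupp.add_apply, Finsupp.tsub_apply, Finsupp.single_apply]
          split_ifs with h
          · subst h; have := hu₀i₀; omega
          · omega
        have : β = monomial (u₀ - Finsupp.single i₀ 1) (coeff u₀ f) * X i₀ := by
          rw [hβ, X, monomial_mul, mul_one, hidx]
        rw [this]
        exact Ideal.mul_mem_left _ _ (Ideal.subset_span hXmem)
      have hβker : psi E φ ρt β = 0 := by
        rw [hβ, psi_monomial E φ ρt hmul hne, if_neg (by push_neg; exact ⟨i₀, hi₀supp, hEi₀⟩)]
      set f' := f - β with hf'
      have hker' : psi E φ ρt f' = 0 := by rw [hf', map_sub, hker, hβker, sub_self]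
      have hsupp' : f'.support ⊆ f.support.erase u₀ := by
        intro v hv
        rw [MvPolynomial.mem_support_iff] at hv
        rw [hf', hβ, coeff_sub, coeff_monomial] at hv
        rcases eq_or_ne v u₀ with rfl | hvne
        · rw [if_pos rfl] at hv; simp at hv
        · refine Finset.mem_erase.mpr ⟨hvne, ?_⟩
          rw [MvPolynomial.mem_support_iff]
          intro h0
          rw [h0, if_neg (fun h => hvne h.symm)] at hv
          simp at hv
      have hcard' : f'.support.card ≤ N := by
        have h1 := Finset.card_le_card hsupp'
        have h2 : (f.support.erase u₀).card < f.support.card :=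
          Finset.card_erase_lt_of_mem hu₀
        omega
      have hmem' := ih f' hcard' hker'
      have : f = f' + β := by rw [hf']; ring
      rw [this]
      exact Ideal.add_mem _ hmem' hβspan

include hmul hne hE in
lemma span_gens_eq_ker :
    Ideal.span (gens E φ ρt) = RingHom.ker (psi E φ ρt) := by
  refine le_antisymm ?_ (ker_le_span E φ ρt hmul hne hE)
  rw [Ideal.span_le]
  intro f hf
  exact psi_gens_zero E φ ρt hmul hne hE hf

end Ker

end Stmt5Aux


namespace Stmt5Aux

section helper

variable {k : Type*} [Field k] {n : ℕ}

lemma monomial_mem_of_var (T : Ideal (MvPolynomial (Fin n) k)) {i : Fin n} {u : Fin n →₀ ℕ}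
    (a : k) (hX : (X i : MvPolynomial (Fin n) k) ∈ T) (hi : u i ≠ 0) : monomial u a ∈ T := by
  have hidx : u - Finsupp.single i 1 + Finsupp.single i 1 = u := by
    ext j
    simp only [Finsupp.add_apply, Finsupp.tsub_apply, Finsupp.single_apply]
    split_ifs with h
    · subst h; omega
    · omega
  have : monomial u a = monomial (u - Finsupp.single i 1) a * X i := by
    rw [X, monomial_mul, mul_one, hidx]
  rw [this]
  exact Ideal.mul_mem_left _ _ hX

end helper

end Stmt5Aux

/-- Over an algebraically closed field, every minimal prime of a
binomial ideal is a binomial ideal. -/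
theorem stmt5 {k : Type*} [Field k] [IsAlgClosed k] {n : ℕ}
    (I P : Ideal (MvPolynomial (Fin n) k)) (hbin : IsBinomialIdeal I)
    (hP : P ∈ I.minimalPrimes) : IsBinomialIdeal P := by
  classical
  obtain ⟨Bset, hBbin, hBspan⟩ := hbin
  have hPprime : P.IsPrime := hP.1.1
  have hIP : I ≤ P := hP.1.2
  -- the lattice of exponents of binomials in P supported off E
  let L0 : AddSubgroup (Fin n →₀ ℤ) :=
    { carrier := {w | Stmt5Aux.inL P w}
      add_mem' := fun ha hb => (Stmt5Aux.inL_add P hPprime ha hb).1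
      zero_mem' := Stmt5Aux.inL_zero P
      neg_mem' := fun h => Stmt5Aux.inL_neg P hPprime h }
  let L : Submodule ℤ (Fin n →₀ ℤ) := AddSubgroup.toIntSubmodule L0
  have hLmem : ∀ w, w ∈ L ↔ Stmt5Aux.inL P w := fun w => Iff.rfl
  haveI : NoZeroSMulDivisors ℤ ((Fin n →₀ ℤ) ⧸ L) := by
    refine ⟨fun {d x} h => ?_⟩
    by_cases hd : d = 0
    · exact Or.inl hd
    · refine Or.inr ?_
      obtain ⟨u, rfl⟩ := Submodule.mkQ_surjective L x
      have h2 : L.mkQ (d • u) = 0 := by rwa [map_smul]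
      have h3 : d • u ∈ L := (Submodule.Quotient.mk_eq_zero L).mp h2
      exact (Submodule.Quotient.mk_eq_zero L).mpr
        (Stmt5Aux.inL_sat P hPprime hd ((hLmem _).mp h3))
  haveI : Module.Free ℤ ((Fin n →₀ ℤ) ⧸ L) := Module.free_of_finite_type_torsion_free'
  -- a splitting of the quotient map
  obtain ⟨s, hs⟩ := Module.projective_lifting_property L.mkQ LinearMap.id
    (Submodule.mkQ_surjective L)
  have hsec : ∀ x, L.mkQ (s x) = x := fun x => congrArg (fun g => g x) (congrArg (fun g => g.toFun) hs)
  -- the extended character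
  let ρt : (Fin n →₀ ℤ) → k := fun u => Stmt5Aux.rho P (u - s (L.mkQ u))
  have hmemL : ∀ u, Stmt5Aux.inL P (u - s (L.mkQ u)) := by
    intro u
    have : L.mkQ (u - s (L.mkQ u)) = 0 := by
      rw [map_sub, hsec, sub_self]
    exact (hLmem _).mp ((Submodule.Quotient.mk_eq_zero L).mp this)
  have hmul : ∀ u v, ρt (u + v) = ρt u * ρt v := by
    intro u v
    have e : (u + v) - s (L.mkQ (u + v)) = (u - s (L.mkQ u)) + (v - s (L.mkQ v)) := by
      rw [map_add, map_add]
      abel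
    show Stmt5Aux.rho P _ = _
    rw [e]
    exact (Stmt5Aux.inL_add P hPprime (hmemL u) (hmemL v)).2
  have hne : ∀ u, ρt u ≠ 0 := fun u => (Stmt5Aux.rho_spec P (hmemL u)).1
  have hext : ∀ w, Stmt5Aux.inL P w → ρt w = Stmt5Aux.rho P w := by
    intro w hw
    have h0 : L.mkQ w = 0 := (Submodule.Quotient.mk_eq_zero L).mpr ((hLmem w).mpr hw)
    show Stmt5Aux.rho P _ = _
    rw [h0, map_zero, sub_zero]
  -- coordinates of the quotient
  let bb := Module.Free.chooseBasis ℤ ((Fin n →₀ ℤ) ⧸ L)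
  let φ : (Fin n →₀ ℤ) →+ (Module.Free.ChooseBasisIndex ℤ ((Fin n →₀ ℤ) ⧸ L) →₀ ℤ) :=
    ((bb.repr.toLinearMap.comp L.mkQ).toAddMonoidHom)
  have hker : ∀ w, φ w = 0 ↔ Stmt5Aux.inL P w := by
    intro w
    constructor
    · intro h
      have h1 : bb.repr (L.mkQ w) = 0 := h
      have h2 : L.mkQ w = 0 := by
        have := bb.repr.map_eq_zero_iff.mp h1
        exact this
      exact (hLmem w).mp ((Submodule.Quotient.mk_eq_zero L).mp h2)
    · intro h
      have h2 : L.mkQ w = 0 := (Submodule.Quotient.mk_eq_zero L).mpr ((hLmem w).mpr h)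
      show bb.repr (L.mkQ w) = 0
      rw [h2, map_zero]
  let E : Fin n → Prop := fun i => (X i : MvPolynomial (Fin n) k) ∈ P
  have hE : ∀ w : Fin n →₀ ℤ, φ w = 0 → ∀ i, w i ≠ 0 → ¬ E i := fun w hw i hi =>
    ((hker w).1 hw).1 i hi
  -- the candidate ideal
  set Q : Ideal (MvPolynomial (Fin n) k) := Ideal.span (Stmt5Aux.gens E φ ρt) with hQ
  have hQK : Q = RingHom.ker (Stmt5Aux.psi E φ ρt) :=
    Stmt5Aux.span_gens_eq_ker E φ ρt hmul hne hE
  haveI : IsDomain (AddMonoidAlgebra k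
      (Module.Free.ChooseBasisIndex ℤ ((Fin n →₀ ℤ) ⧸ L) →₀ ℤ)) :=
    NoZeroDivisors.to_isDomain _
  have hQprime : Q.IsPrime := by
    rw [hQK]
    exact RingHom.ker_isPrime _
  have hQP : Q ≤ P := by
    rw [hQ, Ideal.span_le]
    rintro f (⟨w, hw, rfl⟩ | ⟨i, hEi, rfl⟩)
    · have hwL : Stmt5Aux.inL P w := (hker w).1 hw
      have hmem := (Stmt5Aux.rho_spec P hwL).2
      rw [hext w hwL]
      exact hmem
    · exact hEi
  have hIQ : I ≤ Q := by
    rw [hBspan, Ideal.span_le]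
    intro b hb
    obtain ⟨u, v, a, rfl⟩ := hBbin b hb
    have hbP : (monomial u 1 - monomial v a : MvPolynomial (Fin n) k) ∈ P :=
      hIP (hBspan ▸ Ideal.subset_span hb)
    by_cases hu : ∀ i, u i ≠ 0 → (X i : MvPolynomial (Fin n) k) ∉ P
    · by_cases hv : ∀ i, v i ≠ 0 → (X i : MvPolynomial (Fin n) k) ∉ P
      · -- both supported off E
        by_cases ha : a = 0
        · exfalso
          subst ha
          rw [map_zero, sub_zero] at hbP
          exact Stmt5Aux.monomial_notMem P hPprime hu one_ne_zero hbP
        · obtain ⟨hL, hρ, c, hfac⟩ := Stmt5Aux.key1 P hPprime ha hu hv hbP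
          rw [hfac]
          refine Ideal.mul_mem_left _ _ (Ideal.subset_span (Or.inl
            ⟨Stmt5Aux.toZ u - Stmt5Aux.toZ v, (hker _).2 hL, ?_⟩))
          rw [hext _ hL, ← hρ]
      · -- v hits E, u does not : impossible
        exfalso
        push_neg at hv
        obtain ⟨i, hvi, hXi⟩ := hv
        have hva : (monomial v a : MvPolynomial (Fin n) k) ∈ P :=
          Stmt5Aux.monomial_mem_of_var P a hXi hvi
        have : (monomial u 1 : MvPolynomial (Fin n) k) ∈ P := by
          have := P.add_mem hbP hva
          rwa [sub_add_cancel] at this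
        exact Stmt5Aux.monomial_notMem P hPprime hu one_ne_zero this
    · -- u hits E
      push_neg at hu
      obtain ⟨i, hui, hXi⟩ := hu
      have hXiQ : (X i : MvPolynomial (Fin n) k) ∈ Q :=
        Ideal.subset_span (Or.inr ⟨i, hXi, rfl⟩)
      have huQ : (monomial u 1 : MvPolynomial (Fin n) k) ∈ Q :=
        Stmt5Aux.monomial_mem_of_var Q 1 hXiQ hui
      by_cases hv : ∀ j, v j ≠ 0 → (X j : MvPolynomial (Fin n) k) ∉ P
      · -- v off E : forces a = 0
        have huP : (monomial u 1 : MvPolynomial (Fin n) k) ∈ P :=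
          Stmt5Aux.monomial_mem_of_var P 1 hXi hui
        have hva : (monomial v a : MvPolynomial (Fin n) k) ∈ P := by
          have := P.sub_mem huP hbP
          rwa [sub_sub_cancel] at this
        have ha : a = 0 := by
          by_contra ha
          exact Stmt5Aux.monomial_notMem P hPprime hv ha hva
        subst ha
        rw [map_zero, sub_zero]
        exact huQ
      · -- both hit E
        push_neg at hv
        obtain ⟨j, hvj, hXj⟩ := hv
        have hXjQ : (X j : MvPolynomial (Fin n) k) ∈ Q :=
          Ideal.subset_span (Or.inr ⟨j, hXj, rfl⟩)
        exact Q.sub_mem huQ (Stmt5Aux.monomial_mem_of_var Q a hXjQ hvj)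
  -- minimality forces P = Q
  have hPQ : P ≤ Q := hP.2 ⟨hQprime, hIQ⟩ hQP
  have hPeqQ : P = Q := le_antisymm hPQ hQP
  refine ⟨Stmt5Aux.gens E φ ρt, ?_, by rw [hPeqQ]⟩
  rintro f (⟨w, hw, rfl⟩ | ⟨i, hEi, rfl⟩)
  · exact ⟨intPosPart w, intPosPart (-w), ρt w, rfl⟩
  · refine ⟨Finsupp.single i 1, 0, 0, ?_⟩
    rw [X, map_zero, sub_zero]
end

section
/- In the polynomial ring ℚ[x], the ideal ⟨x³ − 1⟩ cannot be written as a finite intersection of primary binomial ideals; that is, ⟨x³ − 1⟩ has no primary decomposition into binomial ideals over ℚ. -/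
open MvPolynomial

/-- A (one-variable) binomial over `ℚ`: `λ·x^a - μ·x^b` (monomials included). -/
def IsBinomial1 (f : Polynomial ℚ) : Prop :=
  ∃ (a b : ℕ) (lam mu : ℚ),
    f = Polynomial.C lam * Polynomial.X ^ a - Polynomial.C mu * Polynomial.X ^ b

/-- A binomial ideal of `ℚ[x]`. -/
def IsBinomialIdeal1 (I : Ideal (Polynomial ℚ)) : Prop :=
  ∃ B : Set (Polynomial ℚ), (∀ f ∈ B, IsBinomial1 f) ∧ I = Ideal.span B

open Polynomial in
lemma omega_facts : ∃ ω : ℂ, ω ^ 3 = 1 ∧ ω ≠ 1 := by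
  refine ⟨(-1 + (Real.sqrt 3 : ℂ) * Complex.I) / 2, ?_, ?_⟩
  · have hs : ((Real.sqrt 3 : ℝ) : ℂ)^2 = 3 := by
      norm_cast
      exact Real.sq_sqrt (by norm_num)
    have hI2 : (Complex.I)^2 = -1 := Complex.I_sq
    linear_combination ((3:ℂ)/8 - (Real.sqrt 3 : ℂ) * Complex.I/8) * hs +
      ((-3 * ((Real.sqrt 3 : ℝ):ℂ)^2)/8 + (((Real.sqrt 3:ℝ):ℂ))^3 * Complex.I/8) * hI2
  · intro h
    have h2 : (2:ℂ) = -1 + (Real.sqrt 3 : ℂ) * Complex.I := by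
      linear_combination -2*h
    have := congrArg Complex.re h2
    simp at this
    norm_num at this

lemma lemB (N : ℕ) :
    (Polynomial.X - 1 : Polynomial ℚ) ^ N ∉ Ideal.span {Polynomial.X ^ 3 - 1} := by
  intro h
  rw [Ideal.mem_span_singleton] at h
  obtain ⟨g, hg⟩ := h
  obtain ⟨ω, hω3, hω1⟩ := omega_facts
  have := congrArg (Polynomial.aeval ω) hg
  simp only [map_mul, map_sub, map_pow, map_one, Polynomial.aeval_X, hω3, sub_self,
    zero_mul] at this
  have hz : ω - 1 = 0 := pow_eq_zero_iff'.mp this |>.1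
  exact hω1 (by linear_combination hz)

lemma keyA (Q : Ideal (Polynomial ℚ)) (hQ : Q.IsPrimary)
    (hB : IsBinomialIdeal1 Q)
    (hmem : (Polynomial.X : Polynomial ℚ) ^ 3 - 1 ∈ Q) :
    ∃ n, ((Polynomial.X : Polynomial ℚ) - 1) ^ n ∈ Q := by
  by_contra hcon
  push_neg at hcon
  have hx1 : (Polynomial.X - 1 : Polynomial ℚ) ∉ Q.radical := by
    rintro ⟨n, hn⟩; exact hcon n hn
  have hQ' := Ideal.isPrimary_iff.mp hQ
  have hquad : (Polynomial.X ^ 2 + Polynomial.X + 1 : Polynomial ℚ) ∈ Q := by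
    have hm : ((Polynomial.X ^ 2 + Polynomial.X + 1) * (Polynomial.X - 1) : Polynomial ℚ) ∈ Q := by
      have he : ((Polynomial.X ^ 2 + Polynomial.X + 1) * (Polynomial.X - 1) : Polynomial ℚ) = Polynomial.X ^ 3 - 1 := by ring
      rw [he]; exact hmem
    rcases hQ'.2 hm with h | h
    · exact h
    · exact absurd h hx1
  set P := Q.radical with hPdef
  haveI hPp : P.IsPrime := Ideal.isPrime_radical hQ
  have hQP : Q ≤ P := Ideal.le_radical
  set R := Polynomial ℚ ⧸ P with hRdef
  set π : Polynomial ℚ →+* R := Ideal.Quotient.mk P with hπ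
  set c : ℚ →+* R := algebraMap ℚ R with hc
  have halg : ∀ q : ℚ, π (Polynomial.C q) = c q := by
    intro q
    rw [hc, IsScalarTower.algebraMap_eq ℚ (Polynomial ℚ) R, Polynomial.algebraMap_eq,
      Ideal.Quotient.algebraMap_eq]
    rfl
  set t : R := π Polynomial.X with ht
  have ht3 : t ^ 3 = 1 := by
    have := Ideal.Quotient.eq_zero_iff_mem.mpr (hQP hmem)
    have h' : π (Polynomial.X ^ 3) - π 1 = 0 := by rw [← map_sub]; exact this
    rw [map_pow, map_one] at h'
    rw [ht]; linear_combination h'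
  have ht2 : t ^ 2 + t + 1 = 0 := by
    have := Ideal.Quotient.eq_zero_iff_mem.mpr (hQP hquad)
    have h' : π (Polynomial.X ^ 2) + π Polynomial.X + π 1 = 0 := by rw [← map_add, ← map_add]; exact this
    rw [map_pow, map_one] at h'
    rw [ht]; linear_combination h'
  have ht0 : t ≠ 0 := by
    intro h
    have : (1 : R) = 0 := by rw [← ht3, h]; ring
    exact one_ne_zero this
  have hinj : Function.Injective c := c.injective
  have htq : ∀ q : ℚ, t ≠ c q := by
    intro q hq
    have hmap : c (q ^ 2 + q + 1) = 0 := by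
      rw [map_add, map_add, map_pow, map_one, ← hq]; exact ht2
    have hq0 : (q ^ 2 + q + 1 : ℚ) = 0 := hinj (by rw [hmap, map_zero])
    nlinarith [sq_nonneg (2 * q + 1)]
  have ht2q : ∀ q : ℚ, t ^ 2 ≠ c q := by
    intro q hq
    have : t = c (-q - 1) := by
      rw [map_sub, map_neg, map_one]; linear_combination ht2 - hq
    exact htq _ this
  have htpow : ∀ a : ℕ, t ^ a = t ^ (a % 3) := by
    intro a
    conv_lhs => rw [← Nat.div_add_mod a 3]
    rw [pow_add, pow_mul, ht3, one_pow, one_mul]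
  have key : ∀ (a b : ℕ) (lam mu : ℚ), Polynomial.C lam * Polynomial.X ^ a - Polynomial.C mu * Polynomial.X ^ b ∈ P → lam = mu := by
    intro a b lam mu hf
    have h0 : c lam * t ^ a = c mu * t ^ b := by
      have h1 := Ideal.Quotient.eq_zero_iff_mem.mpr hf
      have h' : π (Polynomial.C lam) * π Polynomial.X ^ a - π (Polynomial.C mu) * π Polynomial.X ^ b = 0 := by
        rw [← map_pow, ← map_pow, ← map_mul, ← map_mul, ← map_sub]; exact h1
      rw [halg, halg, ← ht] at h'
      linear_combination h'
    rw [htpow a, htpow b] at h0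
    have h2 : c lam * t ^ (a % 3 + (3 - b % 3)) = c mu := by
      have hb3 : b % 3 + (3 - b % 3) = 3 := by omega
      calc c lam * t ^ (a % 3 + (3 - b % 3))
          = c lam * t ^ (a % 3) * t ^ (3 - b % 3) := by rw [pow_add]; ring
        _ = c mu * t ^ (b % 3) * t ^ (3 - b % 3) := by rw [h0]
        _ = c mu * t ^ (b % 3 + (3 - b % 3)) := by rw [pow_add]; ring
        _ = c mu := by rw [hb3, ht3, mul_one]
    rw [htpow] at h2
    have hd : (a % 3 + (3 - b % 3)) % 3 = 0 ∨ (a % 3 + (3 - b % 3)) % 3 = 1 ∨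
        (a % 3 + (3 - b % 3)) % 3 = 2 := by omega
    rcases hd with h | h | h <;> rw [h] at h2
    · rw [pow_zero, mul_one] at h2
      exact hinj h2
    · rw [pow_one] at h2
      by_cases hlam : lam = 0
      · have : c mu = 0 := by rw [← h2, hlam, map_zero, zero_mul]
        have := hinj (by rw [this, map_zero] : c mu = c 0)
        rw [hlam, this]
      · exfalso
        apply htq (mu / lam)
        have hcl : c lam ≠ 0 := fun h => hlam (hinj (by rw [h, map_zero]))
        apply mul_left_cancel₀ hcl
        rw [h2, ← map_mul]
        congr 1
        field_simp
    · by_cases hlam : lam = 0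
      · have : c mu = 0 := by rw [← h2, hlam, map_zero, zero_mul]
        have := hinj (by rw [this, map_zero] : c mu = c 0)
        rw [hlam, this]
      · exfalso
        apply ht2q (mu / lam)
        have hcl : c lam ≠ 0 := fun h => hlam (hinj (by rw [h, map_zero]))
        apply mul_left_cancel₀ hcl
        rw [h2, ← map_mul]
        congr 1
        field_simp
  obtain ⟨B, hBbin, hBspan⟩ := hB
  have hQle : Q ≤ Ideal.span {(Polynomial.X - 1 : Polynomial ℚ)} := by
    rw [hBspan]
    apply Ideal.span_le.mpr
    intro f hf
    obtain ⟨a, b, lam, mu, hfeq⟩ := hBbin f hf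
    have hfP : f ∈ P := hQP (hBspan ▸ Ideal.subset_span hf)
    have hlm : lam = mu := key a b lam mu (hfeq ▸ hfP)
    have hdvd : (Polynomial.X - Polynomial.C (1:ℚ)) ∣ f := by
      rw [Polynomial.dvd_iff_isRoot, Polynomial.IsRoot, hfeq]
      simp [hlm]
    rw [SetLike.mem_coe, Ideal.mem_span_singleton]
    simpa using hdvd
  have : (Polynomial.X ^ 2 + Polynomial.X + 1 : Polynomial ℚ) ∈ Ideal.span {(Polynomial.X - 1 : Polynomial ℚ)} := hQle hquad
  rw [Ideal.mem_span_singleton] at this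
  have hroot : Polynomial.IsRoot (Polynomial.X ^ 2 + Polynomial.X + 1 : Polynomial ℚ) 1 := by
    rw [← Polynomial.dvd_iff_isRoot]
    simpa using this
  simp [Polynomial.IsRoot] at hroot
  norm_num at hroot


/-- In `ℚ[x]`, the ideal `⟨x³ - 1⟩` is not a finite intersection of
primary binomial ideals. -/
theorem stmt6 :
    ¬ ∃ C : Finset (Ideal (Polynomial ℚ)),
        (∀ Q ∈ C, Q.IsPrimary ∧ IsBinomialIdeal1 Q) ∧
        sInf (↑C : Set (Ideal (Polynomial ℚ))) =
          Ideal.span {Polynomial.X ^ 3 - 1} := by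
  rintro ⟨C, hC, hsInf⟩
  have hmem : ∀ Q ∈ C, (Polynomial.X : Polynomial ℚ) ^ 3 - 1 ∈ Q := by
    intro Q hQ
    have h1 : (Polynomial.X : Polynomial ℚ) ^ 3 - 1 ∈
        sInf (↑C : Set (Ideal (Polynomial ℚ))) := by
      rw [hsInf]; exact Ideal.subset_span rfl
    exact (Ideal.mem_sInf.mp h1) hQ
  have hn : ∀ Q ∈ C, ∃ n, (Polynomial.X - 1 : Polynomial ℚ) ^ n ∈ Q := by
    intro Q hQ
    exact keyA Q (hC Q hQ).1 (hC Q hQ).2 (hmem Q hQ)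
  choose! f hf using hn
  set N := C.sup f with hNdef
  have hN : (Polynomial.X - 1 : Polynomial ℚ) ^ N ∈
      sInf (↑C : Set (Ideal (Polynomial ℚ))) := by
    rw [Ideal.mem_sInf]
    intro J hJ
    have hJ' : J ∈ C := hJ
    have hle : f J ≤ N := Finset.le_sup hJ'
    have he : (Polynomial.X - 1 : Polynomial ℚ) ^ N =
        (Polynomial.X - 1) ^ (N - f J) * (Polynomial.X - 1) ^ (f J) := by
      rw [← pow_add]; congr 1; omega
    rw [he]
    exact Ideal.mul_mem_left _ _ (hf J hJ')
  rw [hsInf] at hN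
  exact lemB N hN
end

section
/- Let k be an algebraically closed field of characteristic zero, S = k[x_1,...,x_n], let I ⊆ S be a J-cellular binomial ideal, and let P = I_σ·S + m_J be an associated prime of I, where σ is a saturated partial character on ℤ^J with lattice ideal I_σ ⊆ k[J]. Then P is the unique minimal prime of the ideal I + I_σ·S. -/
open MvPolynomial

/-- If `P = I_σ·S + m_J` is an associated prime of a `J`-cellular
binomial ideal `I` (with `σ` a saturated partial character), then `P` is the unique
minimal prime of `I + I_σ·S`. -/
theorem stmt8 {k : Type*} [Field k] [IsAlgClosed k] [CharZero k] {n : ℕ}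
    (J : Set (Fin n)) (I : Ideal (MvPolynomial (Fin n) k))
    (hbin : IsBinomialIdeal I) (hcell : IsCellular J I)
    (σ : PartialCharacter k ↥J) (hsat : σ.Saturated)
    (hP : IsAssociatedPrimeOf I
      (Ideal.map (inclJ k J) σ.latticeIdeal ⊔ cellMax k J)) :
    (I ⊔ Ideal.map (inclJ k J) σ.latticeIdeal).minimalPrimes =
      {Ideal.map (inclJ k J) σ.latticeIdeal ⊔ cellMax k J} := by
  set P := Ideal.map (inclJ k J) σ.latticeIdeal ⊔ cellMax k J with hPdef
  obtain ⟨hPprime, f, hf⟩ := hP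
  have hIP : I ≤ P := by
    rw [hf]
    intro g hg
    rw [Ideal.mem_colon_span_singleton]
    exact Ideal.mul_mem_right f I hg
  have hItop : (1 : MvPolynomial (Fin n) k) ∉ I := by
    intro h1
    exact hPprime.ne_top (Ideal.eq_top_iff_one P |>.mpr (hIP h1))
  have hQP : I ⊔ Ideal.map (inclJ k J) σ.latticeIdeal ≤ P :=
    sup_le hIP le_sup_left
  have key : ∀ p : Ideal (MvPolynomial (Fin n) k), p.IsPrime →
      I ⊔ Ideal.map (inclJ k J) σ.latticeIdeal ≤ p → P ≤ p := by
    intro p hp hQp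
    refine sup_le (le_trans le_sup_right hQp) ?_
    rw [cellMax, Ideal.span_le]
    rintro g ⟨i, hi, rfl⟩
    obtain ⟨d, hd⟩ := hcell.2 i hi
    have hd0 : d ≠ 0 := by
      rintro rfl
      simpa using hItop (by simpa using hd)
    exact hp.mem_of_pow_mem d (hQp (Ideal.mem_sup_left hd))
  ext p
  simp only [Set.mem_singleton_iff, Ideal.minimalPrimes, Set.mem_setOf_eq]
  constructor
  · rintro ⟨⟨hp, hQp⟩, hmin⟩
    exact le_antisymm (hmin ⟨hPprime, hQP⟩ (key p hp hQp)) (key p hp hQp)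
  · rintro rfl
    exact ⟨⟨hPprime, hQP⟩, fun q hq hle => key q hq.1 hq.2⟩
end

section
/- Let k be a field, S = k[x_1,...,x_n], let I ⊆ S be a binomial ideal, and let m ∈ S be a monomial. Then the colon ideal (I : m) = {f ∈ S : f·m ∈ I} is a binomial ideal. -/
open MvPolynomial

namespace Stmt11Aux
open Pointwise

variable {k : Type*} [Field k] {n : ℕ}

/-- Elements of `I` with at most two terms, supported inside `V`. -/
def P2 (I : Ideal (MvPolynomial (Fin n) k)) (V : Finset (Fin n →₀ ℕ)) :
    Set (MvPolynomial (Fin n) k) :=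
  {b | b ∈ I ∧ b.support.card ≤ 2 ∧ b.support ⊆ V}

lemma elim_step (I : Ideal (MvPolynomial (Fin n) k)) (V : Finset (Fin n →₀ ℕ))
    (α : Fin n →₀ ℕ) (f : MvPolynomial (Fin n) k) (hα : coeff α f = 0)
    (hf : f ∈ Submodule.span k (P2 I V)) :
    f ∈ Submodule.span k (P2 I (V.erase α)) := by
  classical
  rw [Submodule.mem_span_set] at hf
  obtain ⟨d, hd, hde⟩ := hf
  by_cases hex : ∃ b₀ ∈ d.support, α ∈ b₀.support
  · obtain ⟨b₀, hb₀d, hb₀α⟩ := hex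
    obtain ⟨hb₀I, hb₀c, hb₀V⟩ : b₀ ∈ P2 I V := hd hb₀d
    set c₀ : k := coeff α b₀ with hc₀def
    have hc₀ : c₀ ≠ 0 := mem_support_iff.mp hb₀α
    set T : MvPolynomial (Fin n) k → MvPolynomial (Fin n) k :=
      fun b => b - (coeff α b / c₀) • b₀ with hT
    have hcoeffT : ∀ b, coeff α (T b) = 0 := by
      intro b
      simp only [hT, coeff_sub, coeff_smul, smul_eq_mul, ← hc₀def,
        div_mul_cancel₀ _ hc₀, sub_self]
    have hTmem : ∀ b ∈ d.support, T b ∈ P2 I (V.erase α) := by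
      intro b hb
      obtain ⟨hbI, hbc, hbV⟩ : b ∈ P2 I V := hd hb
      have hsub : (T b).support ⊆ b.support ∪ b₀.support := by
        refine (support_sub _ _ _).trans (Finset.union_subset_union le_rfl ?_)
        exact support_smul
      refine ⟨I.sub_mem hbI (Submodule.smul_of_tower_mem I _ hb₀I), ?_, ?_⟩
      · by_cases hαb : α ∈ b.support
        · have h1 : (T b).support ⊆ (b.support.erase α) ∪ (b₀.support.erase α) := by
            intro x hx
            have hxα : x ≠ α := by
              rintro rfl
              exact mem_support_iff.mp hx (hcoeffT b)
            rcases Finset.mem_union.mp (hsub hx) with h | h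
            · exact Finset.mem_union_left _ (Finset.mem_erase.mpr ⟨hxα, h⟩)
            · exact Finset.mem_union_right _ (Finset.mem_erase.mpr ⟨hxα, h⟩)
          calc (T b).support.card ≤ _ := Finset.card_le_card h1
            _ ≤ (b.support.erase α).card + (b₀.support.erase α).card :=
                Finset.card_union_le _ _
            _ ≤ 1 + 1 := by
                gcongr <;>
                  [skip; skip] <;>
                  simp [Finset.card_erase_of_mem, hαb, hb₀α] <;> omega
            _ ≤ 2 := le_rfl
        · have : coeff α b = 0 := notMem_support_iff.mp hαb
          simp only [hT, this, zero_div, zero_smul, sub_zero]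
          exact hbc
      · intro x hx
        have hxα : x ≠ α := by
          rintro rfl
          exact mem_support_iff.mp hx (hcoeffT b)
        rcases Finset.mem_union.mp (hsub hx) with h | h
        · exact Finset.mem_erase.mpr ⟨hxα, hbV h⟩
        · exact Finset.mem_erase.mpr ⟨hxα, hb₀V h⟩
    have hsum : (d.sum fun b γ => γ • T b) = f := by
      have hcoefff : ∑ b ∈ d.support, d b * coeff α b = 0 := by
        have := congrArg (coeff α) hde
        rw [Finsupp.sum, coeff_sum] at this
        simpa [coeff_smul, hα] using this
      have : (d.sum fun b γ => γ • T b)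
          = (d.sum fun b γ => γ • b) - (∑ b ∈ d.support, d b * (coeff α b / c₀)) • b₀ := by
        rw [Finsupp.sum, Finsupp.sum, Finset.sum_smul, ← Finset.sum_sub_distrib]
        refine Finset.sum_congr rfl fun b hb => ?_
        rw [hT]
        simp [smul_sub, smul_smul]
      rw [this, hde]
      have : ∑ b ∈ d.support, d b * (coeff α b / c₀)
          = (∑ b ∈ d.support, d b * coeff α b) / c₀ := by
        rw [Finset.sum_div]
        exact Finset.sum_congr rfl fun b _ => (mul_div_assoc _ _ _).symm
      rw [this, hcoefff, zero_div, zero_smul, sub_zero]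
    rw [← hsum]
    exact Submodule.sum_mem _ fun b hb =>
      Submodule.smul_mem _ _ (Submodule.subset_span (hTmem b hb))
  · push_neg at hex
    rw [← hde]
    refine Submodule.sum_mem _ fun b hb => Submodule.smul_mem _ _ (Submodule.subset_span ?_)
    obtain ⟨h1, h2, h3⟩ := hd hb
    exact ⟨h1, h2, fun x hx => Finset.mem_erase.mpr ⟨fun h => hex b hb (h ▸ hx), h3 hx⟩⟩



lemma down_to_support (I : Ideal (MvPolynomial (Fin n) k)) :
    ∀ V : Finset (Fin n →₀ ℕ), ∀ f : MvPolynomial (Fin n) k,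
      f ∈ Submodule.span k (P2 I V) → f ∈ Submodule.span k (P2 I f.support) := by
  classical
  intro V
  induction V using Finset.strongInduction with
  | _ V ih =>
    intro f hf
    by_cases hV : V ⊆ f.support
    · have hsub : P2 I V ⊆ P2 I f.support := fun b hb => ⟨hb.1, hb.2.1, hb.2.2.trans hV⟩
      exact Submodule.span_mono hsub hf
    · obtain ⟨α, hαV, hαf⟩ := Finset.not_subset.mp hV
      exact ih (V.erase α) (Finset.erase_ssubset hαV) f
        (elim_step I V α f (notMem_support_iff.mp hαf) hf)

lemma mem_span_two {I : Ideal (MvPolynomial (Fin n) k)} (hbin : IsBinomialIdeal I)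
    {f : MvPolynomial (Fin n) k} (hf : f ∈ I) :
    f ∈ Submodule.span k {b : MvPolynomial (Fin n) k | b ∈ I ∧ b.support.card ≤ 2} := by
  classical
  obtain ⟨B, hB, hIB⟩ := hbin
  set N := Submodule.span k {b : MvPolynomial (Fin n) k | b ∈ I ∧ b.support.card ≤ 2} with hN
  have key : ∀ p : MvPolynomial (Fin n) k, p ∈ I → p.support.card ≤ 2 →
      ∀ a : MvPolynomial (Fin n) k, a * p ∈ N := by
    intro p hpI hpc a
    induction a using MvPolynomial.induction_on' with
    | monomial s c =>
      apply Submodule.subset_span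
      refine ⟨I.mul_mem_left _ hpI, ?_⟩
      calc ((monomial s c : MvPolynomial (Fin n) k) * p).support.card
          ≤ ((monomial s c : MvPolynomial (Fin n) k).support + p.support).card :=
            Finset.card_le_card (support_mul _ _)
        _ ≤ (monomial s c : MvPolynomial (Fin n) k).support.card * p.support.card :=
            Finset.card_add_le
        _ ≤ 1 * 2 := by
            refine Nat.mul_le_mul ?_ hpc
            rw [support_monomial]
            split <;> simp
        _ ≤ 2 := by omega
    | add a b ha hb =>
      rw [add_mul]
      exact add_mem ha hb
  have mulc : ∀ a : MvPolynomial (Fin n) k, ∀ x ∈ N, a * x ∈ N := by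
    intro a x hx
    induction hx using Submodule.span_induction with
    | mem p hp => exact key p hp.1 hp.2 a
    | zero => rw [mul_zero]; exact zero_mem N
    | add x y _ _ hx hy => rw [mul_add]; exact add_mem hx hy
    | smul γ x _ hx => rw [mul_smul_comm]; exact Submodule.smul_mem _ _ hx
  rw [hIB] at hf
  induction hf using Submodule.span_induction with
  | mem b hb =>
    apply Submodule.subset_span
    refine ⟨hIB ▸ Ideal.subset_span hb, ?_⟩
    obtain ⟨u, v, a, rfl⟩ := hB b hb
    calc ((monomial u 1 - monomial v a : MvPolynomial (Fin n) k)).support.card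
        ≤ ((monomial u (1:k)).support ∪ (monomial v a).support).card :=
          Finset.card_le_card (support_sub _ _ _)
      _ ≤ (monomial u (1:k)).support.card + (monomial v a).support.card :=
          Finset.card_union_le _ _
      _ ≤ 1 + 1 := by
          gcongr <;> rw [support_monomial] <;> split <;> simp
      _ ≤ 2 := le_rfl
  | zero => exact zero_mem N
  | add x y _ _ hx hy => exact add_mem hx hy
  | smul a x _ hx => exact mulc a x hx

/-- Main decomposition: every element of a binomial ideal is a `k`-linear
combination of ≤2-term elements of `I` supported in its own support. -/
lemma key_decomp {I : Ideal (MvPolynomial (Fin n) k)} (hbin : IsBinomialIdeal I)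
    {f : MvPolynomial (Fin n) k} (hf : f ∈ I) :
    f ∈ Submodule.span k (P2 I f.support) := by
  classical
  have h := mem_span_two hbin hf
  rw [Submodule.mem_span_set] at h
  obtain ⟨d, hd, hde⟩ := h
  set V : Finset (Fin n →₀ ℕ) := d.support.sup (fun b => b.support) with hV
  refine down_to_support I V f ?_
  rw [← hde]
  refine Submodule.sum_mem _ fun b hb => Submodule.smul_mem _ _ (Submodule.subset_span ?_)
  exact ⟨(hd hb).1, (hd hb).2, Finset.le_sup hb⟩



/-- The quotient of `b` by the monomial `x^u` (meaningful when `x^u` divides `b`). -/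
noncomputable def quotBy (u : Fin n →₀ ℕ) (b : MvPolynomial (Fin n) k) :
    MvPolynomial (Fin n) k :=
  ∑ α ∈ b.support, monomial (α - u) (coeff α b)

lemma quotBy_spec {u : Fin n →₀ ℕ} {b : MvPolynomial (Fin n) k}
    (hb : ∀ α ∈ b.support, ∃ β, α = β + u) :
    quotBy u b * monomial u 1 = b := by
  rw [quotBy, Finset.sum_mul]
  conv_rhs => rw [as_sum b]
  refine Finset.sum_congr rfl fun α hα => ?_
  rw [monomial_mul, mul_one]
  obtain ⟨β, rfl⟩ := hb α hα
  rw [add_tsub_cancel_right]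

lemma quotBy_card {u : Fin n →₀ ℕ} {b : MvPolynomial (Fin n) k}
    (hb : ∀ α ∈ b.support, ∃ β, α = β + u) :
    (quotBy u b).support.card ≤ b.support.card := by
  refine Finset.card_le_card_of_injOn (fun β => β + u) (fun β hβ => ?_)
    (fun x _ y _ h => by simpa using add_left_injective u h)
  show β + u ∈ b.support
  rw [mem_support_iff]
  have : coeff (β + u) (quotBy u b * monomial u 1) = coeff β (quotBy u b) := by
    rw [coeff_mul_monomial, mul_one]
  rw [quotBy_spec hb] at this
  rw [this]
  exact mem_support_iff.mp hβ

/-- A ≤2-term element of an ideal lies in the span of the binomials of the ideal. -/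
lemma two_term_mem (J : Ideal (MvPolynomial (Fin n) k)) (g : MvPolynomial (Fin n) k)
    (hg : g ∈ J) (hcard : g.support.card ≤ 2) :
    g ∈ Ideal.span {f : MvPolynomial (Fin n) k | IsBinomial f ∧ f ∈ J} := by
  classical
  obtain h0 | h1 | h2 : g.support.card = 0 ∨ g.support.card = 1 ∨ g.support.card = 2 := by
    omega
  · rw [Finset.card_eq_zero, support_eq_empty] at h0
    rw [h0]; exact zero_mem _
  · obtain ⟨α, hα⟩ := Finset.card_eq_one.mp h1
    have hαs : α ∈ g.support := hα ▸ Finset.mem_singleton_self α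
    set cα := coeff α g with hcαdef
    have hcα : cα ≠ 0 := mem_support_iff.mp hαs
    have hg' : g = monomial α cα := by
      conv_lhs => rw [as_sum g]
      rw [hα, Finset.sum_singleton]
    have hbJ : (monomial α 1 : MvPolynomial (Fin n) k) ∈ J := by
      have : (monomial α 1 : MvPolynomial (Fin n) k) = C cα⁻¹ * g := by
        rw [hg', C_mul_monomial, inv_mul_cancel₀ hcα]
      rw [this]; exact J.mul_mem_left _ hg
    have hbin : IsBinomial (monomial α 1 : MvPolynomial (Fin n) k) :=
      ⟨α, α, 0, by rw [monomial_zero, sub_zero]⟩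
    have : g = C cα * monomial α 1 := by rw [C_mul_monomial, mul_one, ← hg']
    rw [this]
    exact Ideal.mul_mem_left _ _ (Ideal.subset_span ⟨hbin, hbJ⟩)
  · obtain ⟨α, β, hne, hαβ⟩ := Finset.card_eq_two.mp h2
    have hαs : α ∈ g.support := hαβ ▸ by simp
    have hβs : β ∈ g.support := hαβ ▸ by simp
    have hcα : coeff α g ≠ 0 := mem_support_iff.mp hαs
    set cα := coeff α g
    set cβ := coeff β g
    have hg' : g = monomial α cα + monomial β cβ := by
      conv_lhs => rw [as_sum g]
      rw [hαβ, Finset.sum_pair hne]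
    set b : MvPolynomial (Fin n) k := monomial α 1 + monomial β (cα⁻¹ * cβ) with hbdef
    have hb : b = C cα⁻¹ * g := by
      rw [hg', mul_add, C_mul_monomial, C_mul_monomial, inv_mul_cancel₀ hcα]
    have hbJ : b ∈ J := by rw [hb]; exact J.mul_mem_left _ hg
    have hbin : IsBinomial b := ⟨α, β, -(cα⁻¹ * cβ), by
      rw [hbdef, map_neg, sub_neg_eq_add]⟩
    have : g = C cα * b := by
      rw [hb, ← mul_assoc, ← C_mul, mul_inv_cancel₀ hcα, C_1, one_mul]
    rw [this]
    exact Ideal.mul_mem_left _ _ (Ideal.subset_span ⟨hbin, hbJ⟩)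


end Stmt11Aux

open Stmt11Aux
open Pointwise

/-- The colon ideal of a binomial ideal by a monomial is binomial. -/
theorem stmt11 {k : Type*} [Field k] {n : ℕ}
    (I : Ideal (MvPolynomial (Fin n) k)) (hbin : IsBinomialIdeal I)
    (u : Fin n →₀ ℕ) (c : k) (hc : c ≠ 0) :
    IsBinomialIdeal (I.colon (Ideal.span {monomial u c})) := by
  classical
  set J := I.colon (Ideal.span {monomial u c}) with hJ
  refine ⟨{f : MvPolynomial (Fin n) k | IsBinomial f ∧ f ∈ J}, fun f hf => hf.1, ?_⟩
  refine le_antisymm (fun f hf => ?_) (Ideal.span_le.mpr fun f hf => hf.2)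
  have hfm : f * monomial u c ∈ I := Ideal.mem_colon_span_singleton.mp hf
  have hdiv : ∀ α ∈ (f * monomial u c).support, ∃ β, α = β + u := by
    intro α hα
    have h := support_mul f (monomial u c) hα
    rw [support_monomial, if_neg hc] at h
    rw [Finset.mem_add] at h
    obtain ⟨β, hβ, γ, hγ, rfl⟩ := h
    rw [Finset.mem_singleton] at hγ
    exact ⟨β, by rw [hγ]⟩
  have h1 := key_decomp hbin hfm
  rw [Submodule.mem_span_set] at h1
  obtain ⟨d, hd, hde⟩ := h1
  set K := Ideal.span {f : MvPolynomial (Fin n) k | IsBinomial f ∧ f ∈ J} with hK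
  -- each b in the representation is divisible by x^u
  have hbdiv : ∀ b ∈ d.support, ∀ α ∈ b.support, ∃ β, α = β + u := by
    intro b hb α hα
    exact hdiv α ((hd hb).2.2 hα)
  -- the sum of quotients
  have hqsum : (d.sum fun b γ => γ • quotBy u b) * monomial u 1 = C c * f * monomial u 1 := by
    rw [Finsupp.sum, Finset.sum_mul]
    have : ∀ b ∈ d.support, (d b • quotBy u b) * monomial u 1 = d b • b := by
      intro b hb
      rw [smul_mul_assoc, quotBy_spec (hbdiv b hb)]
    rw [Finsupp.sum] at hde
    rw [Finset.sum_congr rfl this, hde, mul_comm (C c) f, mul_assoc, C_mul_monomial, mul_one]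
  have hmne : (monomial u 1 : MvPolynomial (Fin n) k) ≠ 0 := by
    rw [Ne, monomial_eq_zero]; exact one_ne_zero
  have hqf : d.sum (fun b γ => γ • quotBy u b) = C c * f := mul_right_cancel₀ hmne hqsum
  have hfq : f = C c⁻¹ * d.sum (fun b γ => γ • quotBy u b) := by
    rw [hqf, ← mul_assoc, ← C_mul, inv_mul_cancel₀ hc, C_1, one_mul]
  rw [hfq]
  rw [Finsupp.sum]
  refine Ideal.mul_mem_left _ _ (Submodule.sum_mem _ fun b hb => ?_)
  show (d b) • quotBy u b ∈ K
  rw [smul_eq_C_mul]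
  refine Ideal.mul_mem_left _ _ (two_term_mem J (quotBy u b) ?_ ?_)
  · rw [hJ, Ideal.mem_colon_span_singleton]
    have hmc : (monomial u c : MvPolynomial (Fin n) k) = C c * monomial u 1 := by
      rw [C_mul_monomial, mul_one]
    have : quotBy u b * monomial u c = C c * b := by
      calc quotBy u b * monomial u c = C c * (quotBy u b * monomial u 1) := by
            rw [hmc]; ring
        _ = C c * b := by rw [quotBy_spec (hbdiv b hb)]
    rw [this]
    exact I.mul_mem_left _ (hd hb).1
  · exact (quotBy_card (hbdiv b hb)).trans (hd hb).2.1
end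

section
/- Let k be a field, S = k[x_1,...,x_n], let I ⊆ S be a binomial ideal, and let J ⊆ {1,...,n}. Then the elimination ideal I ∩ k[J], where k[J] is the subring of S generated by the variables x_i with i ∈ J, is a binomial ideal of k[J]. -/
open MvPolynomial

section Aux
variable {k : Type*} [Field k] {n : ℕ}

open scoped Classical in
noncomputable def mu (W : Submodule k (MvPolynomial (Fin n) k)) (u v : Fin n →₀ ℕ) : k :=
  if h : ∃ a : k, a ≠ 0 ∧ monomial v 1 - monomial u a ∈ W then h.choose else 0

variable {W : Submodule k (MvPolynomial (Fin n) k)} {u : Fin n →₀ ℕ}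

lemma mu_spec {v : Fin n →₀ ℕ} (h : mu W u v ≠ 0) :
    monomial v 1 - monomial u (mu W u v) ∈ W := by
  unfold mu at *
  by_cases hex : ∃ a : k, a ≠ 0 ∧ monomial v 1 - monomial u a ∈ W
  · rw [dif_pos hex] at *; exact hex.choose_spec.2
  · rw [dif_neg hex] at h; exact absurd rfl h

lemma uniq_rel (hu : monomial u (1:k) ∉ W) {v : Fin n →₀ ℕ} {a a' : k}
    (h : monomial v 1 - monomial u a ∈ W) (h' : monomial v 1 - monomial u a' ∈ W) :
    a = a' := by
  by_contra hne
  have hd : (monomial u (a - a') : MvPolynomial (Fin n) k) ∈ W := by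
    have := W.sub_mem h' h
    have e : (monomial v 1 - monomial u a') - (monomial v 1 - monomial u a)
        = (monomial u (a - a') : MvPolynomial (Fin n) k) := by
      rw [map_sub]; ring
    rwa [e] at this
  have : (monomial u (1:k) : MvPolynomial (Fin n) k) ∈ W := by
    have := W.smul_mem ((a - a')⁻¹) hd
    rwa [smul_monomial, smul_eq_mul, inv_mul_cancel₀ (sub_ne_zero.mpr hne)] at this
  exact hu this

lemma mu_eq (hu : monomial u (1:k) ∉ W) {v : Fin n →₀ ℕ} {a : k} (ha : a ≠ 0)
    (h : monomial v 1 - monomial u a ∈ W) : mu W u v = a := by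
  have hex : ∃ a : k, a ≠ 0 ∧ monomial v 1 - monomial u a ∈ W := ⟨a, ha, h⟩
  rw [mu, dif_pos hex]
  exact uniq_rel hu hex.choose_spec.2 h

lemma mu_self (hu : monomial u (1:k) ∉ W) : mu W u u = 1 :=
  mu_eq hu one_ne_zero (by simp)

lemma mu_zero_of_mem (hu : monomial u (1:k) ∉ W) {v : Fin n →₀ ℕ}
    (h : (monomial v (1:k) : MvPolynomial (Fin n) k) ∈ W) : mu W u v = 0 := by
  by_contra hne
  have h2 := W.sub_mem h (mu_spec hne)
  have e : (monomial v (1:k) : MvPolynomial (Fin n) k) - (monomial v 1 - monomial u (mu W u v))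
      = monomial u (mu W u v) := by ring
  rw [e] at h2
  have : (monomial u (1:k) : MvPolynomial (Fin n) k) ∈ W := by
    have := W.smul_mem ((mu W u v)⁻¹) h2
    rwa [smul_monomial, smul_eq_mul, inv_mul_cancel₀ hne] at this
  exact hu this

end Aux
section Aux2
variable {k : Type*} [Field k] {n : ℕ}

noncomputable def phi (W : Submodule k (MvPolynomial (Fin n) k)) (u : Fin n →₀ ℕ)
    (g : MvPolynomial (Fin n) k) : k :=
  ∑ w ∈ g.support, mu W u w * coeff w g

variable {W : Submodule k (MvPolynomial (Fin n) k)} {u : Fin n →₀ ℕ}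

lemma phi_superset {g : MvPolynomial (Fin n) k} {s : Finset (Fin n →₀ ℕ)}
    (hs : g.support ⊆ s) : phi W u g = ∑ w ∈ s, mu W u w * coeff w g := by
  rw [phi]
  refine Finset.sum_subset hs ?_
  intro w _ hw
  rw [notMem_support_iff.mp hw, mul_zero]

lemma phi_add (g g' : MvPolynomial (Fin n) k) : phi W u (g + g') = phi W u g + phi W u g' := by
  have h1 : (g + g').support ⊆ g.support ∪ g'.support := support_add
  rw [phi_superset h1, phi_superset (Finset.subset_union_left (s₂ := g'.support)),
    phi_superset (Finset.subset_union_right (s₁ := g.support)), ← Finset.sum_add_distrib]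
  refine Finset.sum_congr rfl fun w _ => ?_
  rw [coeff_add, mul_add]

lemma phi_smul (c : k) (g : MvPolynomial (Fin n) k) : phi W u (c • g) = c * phi W u g := by
  have h1 : (c • g).support ⊆ g.support := by
    intro w hw
    rw [mem_support_iff] at hw ⊢
    intro h0
    exact hw (by rw [coeff_smul, h0, smul_zero])
  rw [phi_superset h1, phi, Finset.mul_sum]
  refine Finset.sum_congr rfl fun w _ => ?_
  rw [coeff_smul, smul_eq_mul]; ring

lemma phi_binomial (hu : monomial u (1:k) ∉ W) (p q : Fin n →₀ ℕ) (a : k)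
    (hb : monomial p 1 - monomial q a ∈ W) :
    phi W u (monomial p 1 - monomial q a) = 0 := by
  classical
  set b : MvPolynomial (Fin n) k := monomial p 1 - monomial q a with hbdef
  have hsupp : b.support ⊆ {p, q} := by
    intro w hw
    rw [mem_support_iff] at hw
    by_contra hmem
    simp only [Finset.mem_insert, Finset.mem_singleton, not_or] at hmem
    apply hw
    rw [hbdef, coeff_sub, coeff_monomial, coeff_monomial,
      if_neg (fun h => hmem.1 h.symm), if_neg (fun h => hmem.2 h.symm), sub_zero]
  rw [phi_superset hsupp]
  by_cases hpq : p = q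
  · subst hpq
    have hpp : ({p, p} : Finset (Fin n →₀ ℕ)) = {p} := by simp
    rw [hpp, Finset.sum_singleton, hbdef, coeff_sub, coeff_monomial, if_pos rfl,
      coeff_monomial, if_pos rfl]
    by_cases ha1 : a = 1
    · simp [ha1]
    · have hmon : (monomial p (1:k) : MvPolynomial (Fin n) k) ∈ W := by
        have e : b = monomial p (1 - a) := by rw [hbdef, ← map_sub]
        have hb' : (monomial p (1 - a) : MvPolynomial (Fin n) k) ∈ W := e ▸ hb
        have h2 := W.smul_mem (1 - a)⁻¹ hb'
        rwa [smul_monomial, smul_eq_mul,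
          inv_mul_cancel₀ (sub_ne_zero.mpr (Ne.symm ha1))] at h2
      rw [mu_zero_of_mem hu hmon]
      ring
  · rw [Finset.sum_pair hpq]
    have cp : coeff p b = 1 := by
      rw [hbdef, coeff_sub, coeff_monomial, if_pos rfl, coeff_monomial, if_neg (Ne.symm hpq), sub_zero]
    have cq : coeff q b = -a := by
      rw [hbdef, coeff_sub, coeff_monomial, if_neg hpq, coeff_monomial, if_pos rfl, zero_sub]
    rw [cp, cq]
    by_cases ha : a = 0
    · subst ha
      have hmon : (monomial p (1:k) : MvPolynomial (Fin n) k) ∈ W := by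
        rwa [hbdef, map_zero, sub_zero] at hb
      rw [mu_zero_of_mem hu hmon]; ring
    · by_cases hq : mu W u q = 0
      · have hp0 : mu W u p = 0 := by
          by_contra hp
          have h1 := mu_spec (W := W) (u := u) hp
          have h2 := W.sub_mem h1 hb
          have e : (monomial p 1 - monomial u (mu W u p)) - b
              = monomial q a - monomial u (mu W u p) := by rw [hbdef]; ring
          rw [e] at h2
          have h3 := W.smul_mem a⁻¹ h2
          have e2 : a⁻¹ • ((monomial q a : MvPolynomial (Fin n) k) - monomial u (mu W u p))
              = monomial q 1 - monomial u (a⁻¹ * mu W u p) := by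
            rw [smul_sub, smul_monomial, smul_monomial, smul_eq_mul, smul_eq_mul,
              inv_mul_cancel₀ ha]
          rw [e2] at h3
          have heq := mu_eq hu (mul_ne_zero (inv_ne_zero ha) hp) h3
          rw [heq] at hq
          exact mul_ne_zero (inv_ne_zero ha) hp hq
        rw [hp0, hq]; ring
      · have h1 := mu_spec (W := W) (u := u) hq
        have h2 : monomial p 1 - monomial u (a * mu W u q) ∈ W := by
          have h3 := W.add_mem hb (W.smul_mem a h1)
          have e : b + a • ((monomial q 1 : MvPolynomial (Fin n) k) - monomial u (mu W u q))
              = monomial p 1 - monomial u (a * mu W u q) := by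
            rw [hbdef, smul_sub, smul_monomial, smul_monomial, smul_eq_mul, smul_eq_mul, mul_one]
            ring
          rwa [e] at h3
        have hpmu := mu_eq hu (mul_ne_zero ha hq) h2
        rw [hpmu]; ring

lemma phi_vanish (hu : monomial u (1:k) ∉ W) {T : Set (MvPolynomial (Fin n) k)}
    (hT : ∀ b ∈ T, IsBinomial b) (hTW : Submodule.span k T ≤ W)
    {f : MvPolynomial (Fin n) k} (hf : f ∈ Submodule.span k T) : phi W u f = 0 := by
  refine Submodule.span_induction ?_ ?_ ?_ ?_ hf
  · intro x hx
    obtain ⟨p, q, a, rfl⟩ := hT x hx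
    exact phi_binomial hu p q a (hTW (Submodule.subset_span hx))
  · rw [phi]; simp
  · intro x y _ _ hx hy; rw [phi_add, hx, hy, add_zero]
  · intro c x _ hx; rw [phi_smul, hx, mul_zero]

end Aux2
section Aux3
variable {k : Type*} [Field k] {n : ℕ}

lemma span_binomial_elim {J : Set (Fin n)} {T : Set (MvPolynomial (Fin n) k)}
    (hT : ∀ b ∈ T, IsBinomial b) :
    ∀ (N : ℕ) (f : MvPolynomial (Fin n) k), f.support.card ≤ N →
      f ∈ Submodule.span k T →
      (∀ w ∈ f.support, (↑w.support : Set (Fin n)) ⊆ J) →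
      f ∈ Submodule.span k {h | (∃ (u v : Fin n →₀ ℕ) (a : k),
        ((↑u.support : Set (Fin n)) ⊆ J) ∧ ((↑v.support : Set (Fin n)) ⊆ J) ∧
        h = monomial u 1 - monomial v a) ∧ h ∈ Submodule.span k T} := by
  classical
  intro N
  induction N with
  | zero =>
    intro f hcard _ _
    have : f.support = ∅ := Finset.card_eq_zero.mp (Nat.le_zero.mp hcard)
    have hf0 : f = 0 := support_eq_empty.mp this
    rw [hf0]; exact Submodule.zero_mem _
  | succ N ih =>
    intro f hcard hf hJ
    by_cases hf0 : f = 0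
    · rw [hf0]; exact Submodule.zero_mem _
    set W := Submodule.span k T with hWdef
    set Tgt : Set (MvPolynomial (Fin n) k) := {h | (∃ (u v : Fin n →₀ ℕ) (a : k),
        ((↑u.support : Set (Fin n)) ⊆ J) ∧ ((↑v.support : Set (Fin n)) ⊆ J) ∧
        h = monomial u 1 - monomial v a) ∧ h ∈ W} with hTgt
    obtain ⟨u, hu_mem⟩ := support_nonempty.mpr hf0
    have hcu : coeff u f ≠ 0 := mem_support_iff.mp hu_mem
    have finish : ∀ (d : k) (b : MvPolynomial (Fin n) k), b ∈ Tgt →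
        (f - d • b).support ⊆ f.support.erase u → f ∈ Submodule.span k Tgt := by
      intro d b hb hsub
      have hf' : f - d • b ∈ W := W.sub_mem hf (W.smul_mem d hb.2)
      have hcard' : (f - d • b).support.card ≤ N := by
        calc (f - d • b).support.card ≤ (f.support.erase u).card := Finset.card_le_card hsub
        _ = f.support.card - 1 := Finset.card_erase_of_mem hu_mem
        _ ≤ N := by omega
      have hJ' : ∀ w ∈ (f - d • b).support, (↑w.support : Set (Fin n)) ⊆ J :=
        fun w hw => hJ w (Finset.mem_of_mem_erase (hsub hw))
      have h1 := ih (f - d • b) hcard' hf' hJ'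
      have e : f = (f - d • b) + d • b := by ring
      rw [e]
      exact Submodule.add_mem _ h1 (Submodule.smul_mem _ d (Submodule.subset_span hb))
    by_cases hmem : (monomial u (1:k) : MvPolynomial (Fin n) k) ∈ W
    · refine finish (coeff u f) (monomial u 1) ⟨⟨u, u, 0, hJ u hu_mem, hJ u hu_mem, by
        rw [map_zero, sub_zero]⟩, hmem⟩ ?_
      intro w hw
      have hcw := mem_support_iff.mp hw
      rw [coeff_sub, coeff_smul, smul_eq_mul, coeff_monomial] at hcw
      by_cases hwu : w = u
      · subst hwu; rw [if_pos rfl, mul_one, sub_self] at hcw; exact absurd rfl hcw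
      · rw [if_neg (fun h => hwu h.symm), mul_zero, sub_zero] at hcw
        exact Finset.mem_erase.mpr ⟨hwu, mem_support_iff.mpr hcw⟩
    · -- use phi
      have hphi : phi W u f = 0 := phi_vanish hmem hT le_rfl hf
      have hex : ∃ v ∈ f.support, v ≠ u ∧ mu W u v * coeff v f ≠ 0 := by
        by_contra hcon
        push_neg at hcon
        have : phi W u f = mu W u u * coeff u f :=
          Finset.sum_eq_single_of_mem u hu_mem (fun b hb hbu => hcon b hb hbu)
        rw [hphi, mu_self hmem, one_mul] at this
        exact hcu this.symm
      obtain ⟨v, hv_mem, hvu, hmucv⟩ := hex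
      have hmuv : mu W u v ≠ 0 := fun h => hmucv (by rw [h, zero_mul])
      set b : MvPolynomial (Fin n) k := monomial v 1 - monomial u (mu W u v) with hbdef
      have hbW : b ∈ W := mu_spec hmuv
      refine finish (-(coeff u f * (mu W u v)⁻¹)) b
        ⟨⟨v, u, mu W u v, hJ v hv_mem, hJ u hu_mem, rfl⟩, hbW⟩ ?_
      intro w hw
      have hcw := mem_support_iff.mp hw
      rw [coeff_sub, coeff_smul, smul_eq_mul, hbdef, coeff_sub, coeff_monomial,
        coeff_monomial] at hcw
      by_cases hwu : w = u
      · subst hwu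
        rw [if_neg hvu, if_pos rfl] at hcw
        exact absurd (by field_simp; ring) hcw
      · refine Finset.mem_erase.mpr ⟨hwu, ?_⟩
        by_cases hwv : w = v
        · subst hwv; exact hv_mem
        · rw [if_neg (fun h => hwv h.symm), if_neg (fun h => hwu h.symm), sub_zero, mul_zero,
            sub_zero] at hcw
          exact mem_support_iff.mpr hcw
end Aux3
section Aux4
variable {k : Type*} [Field k] {n : ℕ}

lemma monomial_mul_mem_span {I : Ideal (MvPolynomial (Fin n) k)} (w : Fin n →₀ ℕ)
    {p : MvPolynomial (Fin n) k}
    (hp : p ∈ Submodule.span k {h | IsBinomial h ∧ h ∈ I}) :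
    monomial w (1:k) * p ∈ Submodule.span k {h | IsBinomial h ∧ h ∈ I} := by
  refine Submodule.span_induction ?_ ?_ ?_ ?_ hp
  · intro x hx
    obtain ⟨⟨p', q', a, rfl⟩, hxI⟩ := hx
    refine Submodule.subset_span ⟨⟨w + p', w + q', a, ?_⟩, Ideal.mul_mem_left _ _ hxI⟩
    rw [mul_sub, monomial_mul, monomial_mul, one_mul, one_mul]
  · rw [mul_zero]; exact Submodule.zero_mem _
  · intro x y _ _ hx hy; rw [mul_add]; exact Submodule.add_mem _ hx hy
  · intro c x _ hx; rw [mul_smul_comm]; exact Submodule.smul_mem _ c hx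

lemma mul_mem_span {I : Ideal (MvPolynomial (Fin n) k)} (s : MvPolynomial (Fin n) k)
    {p : MvPolynomial (Fin n) k}
    (hp : p ∈ Submodule.span k {h | IsBinomial h ∧ h ∈ I}) :
    s * p ∈ Submodule.span k {h | IsBinomial h ∧ h ∈ I} := by
  rw [show s * p = ∑ w ∈ s.support, monomial w (coeff w s) * p from by
    rw [← Finset.sum_mul, ← as_sum]]
  refine Submodule.sum_mem _ fun w _ => ?_
  have e : monomial w (coeff w s) * p = (coeff w s) • (monomial w (1:k) * p) := by
    rw [← smul_mul_assoc, smul_monomial, smul_eq_mul, mul_one]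
  rw [e]
  exact Submodule.smul_mem _ _ (monomial_mul_mem_span w hp)

lemma mem_span_binomials {I : Ideal (MvPolynomial (Fin n) k)}
    {B : Set (MvPolynomial (Fin n) k)} (hB : ∀ b ∈ B, IsBinomial b)
    (hI : I = Ideal.span B) {f : MvPolynomial (Fin n) k} (hf : f ∈ I) :
    f ∈ Submodule.span k {h | IsBinomial h ∧ h ∈ I} := by
  rw [hI] at hf
  refine Submodule.span_induction ?_ ?_ ?_ ?_ hf
  · intro x hx
    exact Submodule.subset_span ⟨hB x hx, hI ▸ Ideal.subset_span hx⟩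
  · exact Submodule.zero_mem _
  · intro x y _ _ hx hy; exact Submodule.add_mem _ hx hy
  · intro a x _ hx
    rw [smul_eq_mul]
    exact mul_mem_span a hx

lemma mapDomain_subtypeVal {J : Set (Fin n)} (u : Fin n →₀ ℕ)
    (hu : (↑u.support : Set (Fin n)) ⊆ J) :
    Finsupp.mapDomain (Subtype.val : ↥J → Fin n) (u.subtypeDomain (· ∈ J)) = u := by
  ext i
  by_cases hi : i ∈ J
  · have h := Finsupp.mapDomain_apply Subtype.val_injective (u.subtypeDomain (· ∈ J)) ⟨i, hi⟩
    simpa [Finsupp.subtypeDomain_apply] using h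
  · rw [Finsupp.mapDomain_notin_range _ _ (by rwa [Subtype.range_coe])]
    symm
    rw [← Finsupp.notMem_support_iff]
    exact fun hmem => hi (hu hmem)

end Aux4

/-- The elimination ideal `I ∩ k[J]` of a binomial ideal `I` is a
binomial ideal of `k[J]`. -/
theorem stmt12 {k : Type*} [Field k] {n : ℕ}
    (I : Ideal (MvPolynomial (Fin n) k)) (hbin : IsBinomialIdeal I)
    (J : Set (Fin n)) :
    IsBinomialIdeal (elimJ J I) := by
  classical
  obtain ⟨B₀, hB₀, hIeq⟩ := hbin
  set T : Set (MvPolynomial (Fin n) k) := {h | IsBinomial h ∧ h ∈ I} with hTdef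
  have hT : ∀ b ∈ T, IsBinomial b := fun b hb => hb.1
  have hTI : Submodule.span k T ≤ (I : Ideal (MvPolynomial (Fin n) k)).restrictScalars k :=
    Submodule.span_le.mpr fun x hx => hx.2
  set BinE : Set (MvPolynomial ↥J k) := {g | IsBinomial g ∧ g ∈ elimJ J I} with hBE
  refine ⟨BinE, fun g hg => hg.1, le_antisymm ?_ (Ideal.span_le.mpr fun g hg => hg.2)⟩
  intro g hg
  have hf : (inclJ k J) g ∈ I := hg
  have hfW : (inclJ k J) g ∈ Submodule.span k T := mem_span_binomials hB₀ hIeq hf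
  have hJsupp : ∀ w ∈ ((inclJ k J) g).support, (↑w.support : Set (Fin n)) ⊆ J := by
    intro w hw i hi
    have hv : i ∈ ((inclJ k J) g).vars := (mem_vars i).mpr ⟨w, hw, hi⟩
    have h2 := vars_rename (Subtype.val : ↥J → Fin n) g hv
    obtain ⟨j, _, rfl⟩ := Finset.mem_image.mp h2
    exact j.2
  have hmain := span_binomial_elim (J := J) hT ((inclJ k J) g).support.card _ le_rfl hfW hJsupp
  have hsub : {h : MvPolynomial (Fin n) k | (∃ (u v : Fin n →₀ ℕ) (a : k),
      ((↑u.support : Set (Fin n)) ⊆ J) ∧ ((↑v.support : Set (Fin n)) ⊆ J) ∧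
      h = monomial u 1 - monomial v a) ∧ h ∈ Submodule.span k T} ⊆
      ⇑(inclJ k J).toLinearMap '' BinE := by
    rintro h ⟨⟨u, v, a, hJu, hJv, rfl⟩, hW⟩
    refine ⟨monomial (u.subtypeDomain (· ∈ J)) 1 - monomial (v.subtypeDomain (· ∈ J)) a,
      ⟨⟨_, _, a, rfl⟩, ?_⟩, ?_⟩
    · show (inclJ k J) _ ∈ I
      rw [map_sub, inclJ, rename_monomial, rename_monomial,
        mapDomain_subtypeVal u hJu, mapDomain_subtypeVal v hJv]
      exact hTI hW
    · show (inclJ k J) _ = _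
      rw [map_sub, inclJ, rename_monomial, rename_monomial,
        mapDomain_subtypeVal u hJu, mapDomain_subtypeVal v hJv]
  have hmem2 : (inclJ k J) g ∈ Submodule.span k (⇑(inclJ k J).toLinearMap '' BinE) :=
    Submodule.span_mono hsub hmain
  rw [Submodule.span_image] at hmem2
  obtain ⟨g₀, hg₀, hg₀eq⟩ := hmem2
  have hinj : Function.Injective (inclJ k J) := rename_injective _ Subtype.val_injective
  have hgg : g₀ = g := hinj hg₀eq
  rw [← hgg]
  have hle : Submodule.span k BinE ≤ (Ideal.span BinE).restrictScalars k :=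
    Submodule.span_le.mpr fun x hx => Ideal.subset_span hx
  exact hle hg₀
end

section
/- Let k be an algebraically closed field of characteristic zero and let J be a finite set. If σ is a saturated partial character on ℤ^J, i.e., a group homomorphism ρ : L → k^* on a sublattice L ⊆ ℤ^J with L = (ℚ ⊗ L) ∩ ℤ^J, then the lattice ideal I_σ = ⟨x^{u⁺} − σ(u) x^{u⁻} : u ∈ L⟩ in the polynomial ring k[x_i : i ∈ J] is a prime ideal. -/
open MvPolynomial

set_option maxHeartbeats 1000000 in
/-- Over an algebraically closed field of characteristic zero, the
lattice ideal of a saturated partial character (on `ℤ^J`, `J` finite) is prime. -/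
theorem stmt13 {k : Type*} [Field k] [IsAlgClosed k] [CharZero k]
    {σ : Type*} [Fintype σ]
    (c : PartialCharacter k σ) (hsat : c.Saturated) :
    c.latticeIdeal.IsPrime := by
  classical
  set L' : Submodule ℤ (σ →₀ ℤ) := AddSubgroup.toIntSubmodule c.L with hL'
  have hmemL' : ∀ u : σ →₀ ℤ, u ∈ L' ↔ u ∈ c.L := fun u => Iff.rfl
  haveI hNZ : NoZeroSMulDivisors ℤ ((σ →₀ ℤ) ⧸ L') := by
    constructor
    rintro d q h
    obtain ⟨u, rfl⟩ := Submodule.Quotient.mk_surjective L' q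
    rcases eq_or_ne d 0 with rfl | hd
    · exact Or.inl rfl
    · right
      rw [← Submodule.Quotient.mk_smul] at h
      rw [Submodule.Quotient.mk_eq_zero] at h ⊢
      exact hsat d u hd h
  haveI : IsDomain (AddMonoidAlgebra k ((σ →₀ ℤ) ⧸ L')) := by
    haveI : UniqueSums ((σ →₀ ℤ) ⧸ L') := by
      let b := Module.Free.chooseBasis ℤ ((σ →₀ ℤ) ⧸ L')
      exact UniqueSums.of_injective_addHom b.repr.toAddMonoidHom.toAddHom b.repr.injective inferInstance
    exact NoZeroDivisors.to_isDomain _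
  -- a character on all of ℤ^σ extending c.ρ
  obtain ⟨r, hr_add, hrL⟩ : ∃ r : (σ →₀ ℤ) → kˣ, (∀ a b, r (a + b) = r a * r b) ∧
      (∀ (u : σ →₀ ℤ) (hu : u ∈ c.L), r u = c.ρ ⟨u, hu⟩) := by
    obtain ⟨s, hs⟩ := Module.projective_lifting_property L'.mkQ LinearMap.id L'.mkQ_surjective
    have hsq : ∀ q, L'.mkQ (s q) = q := fun q => LinearMap.congr_fun hs q
    have hpm : ∀ w : σ →₀ ℤ, w - s (L'.mkQ w) ∈ c.L := by
      intro w
      rw [← hmemL', ← Submodule.Quotient.mk_eq_zero, ← Submodule.mkQ_apply, map_sub, hsq, sub_self]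
    refine ⟨fun w => c.ρ ⟨w - s (L'.mkQ w), hpm w⟩, ?_, ?_⟩
    · intro a b
      rw [← c.map_add]
      refine congrArg c.ρ (Subtype.ext ?_)
      show (a + b) - s (L'.mkQ (a + b)) = (a - s (L'.mkQ a)) + (b - s (L'.mkQ b))
      rw [map_add, map_add]
      abel
    · intro u hu
      refine congrArg c.ρ (Subtype.ext ?_)
      show u - s (L'.mkQ u) = u
      have : L'.mkQ u = 0 := by rwa [Submodule.mkQ_apply, Submodule.Quotient.mk_eq_zero]
      rw [this, map_zero, sub_zero]
  have hr0 : r 0 = 1 := by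
    have h := hr_add 0 0
    rw [add_zero] at h
    exact (left_eq_mul.mp h)
  -- the embedding ℕ^σ → ℤ^σ
  obtain ⟨ι', hι'app, hι'add⟩ : ∃ ι' : (σ →₀ ℕ) → (σ →₀ ℤ),
      (∀ (w : σ →₀ ℕ) (i : σ), ι' w i = (w i : ℤ)) ∧ (∀ a b, ι' (a + b) = ι' a + ι' b) := by
    refine ⟨fun w => Finsupp.mapRange.addMonoidHom (Nat.castAddMonoidHom ℤ) w, ?_, ?_⟩
    · intro w i; simp
    · intro a b; exact map_add _ a b
  have lem1 : ∀ u : σ →₀ ℤ, ι' (intPosPart u) - ι' (intPosPart (-u)) = u := by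
    intro u
    ext i
    simp only [Finsupp.sub_apply, hι'app, intPosPart, Finsupp.mapRange_apply, Finsupp.neg_apply]
    omega
  have hA : ∀ w w' : σ →₀ ℕ,
      (w' - intPosPart (ι' w' - ι' w)) + intPosPart (ι' w - ι' w') = w := by
    intro w w'
    ext i
    simp only [Finsupp.add_apply, Finsupp.tsub_apply, intPosPart, Finsupp.mapRange_apply,
      Finsupp.sub_apply, hι'app]
    omega
  have hB : ∀ w w' : σ →₀ ℕ,
      (w' - intPosPart (ι' w' - ι' w)) + intPosPart (ι' w' - ι' w) = w' := by
    intro w w'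
    ext i
    simp only [Finsupp.add_apply, Finsupp.tsub_apply, intPosPart, Finsupp.mapRange_apply,
      Finsupp.sub_apply, hι'app]
    omega
  -- key binomials in the lattice ideal
  have hbin : ∀ (w w' : σ →₀ ℕ), ι' w - ι' w' ∈ c.L →
      (monomial w ((r (ι' w') : k)) - monomial w' ((r (ι' w)) : k)) ∈ c.latticeIdeal := by
    intro w w' hu
    have hg : (monomial (intPosPart (ι' w - ι' w')) 1 -
        monomial (intPosPart (-(ι' w - ι' w'))) ((c.ρ ⟨ι' w - ι' w', hu⟩ : kˣ) : k) :
        MvPolynomial σ k) ∈ c.latticeIdeal :=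
      Ideal.subset_span ⟨⟨ι' w - ι' w', hu⟩, rfl⟩
    have hmul := Ideal.mul_mem_left _
      (monomial (w' - intPosPart (ι' w' - ι' w)) ((r (ι' w') : k))) hg
    have hkey : monomial (w' - intPosPart (ι' w' - ι' w)) ((r (ι' w') : k)) *
        (monomial (intPosPart (ι' w - ι' w')) 1 -
          monomial (intPosPart (-(ι' w - ι' w'))) ((c.ρ ⟨ι' w - ι' w', hu⟩ : kˣ) : k)) =
        monomial w ((r (ι' w') : k)) - monomial w' ((r (ι' w)) : k) := by
      rw [mul_sub, monomial_mul, monomial_mul, neg_sub, hA, hB, mul_one]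
      congr 1
      have hrw : r (ι' w) = c.ρ ⟨ι' w - ι' w', hu⟩ * r (ι' w') := by
        rw [← hrL _ hu, ← hr_add]
        congr 1
        abel
      rw [hrw]
      push_cast
      ring
    rwa [hkey] at hmul
  -- the twisted monomial homomorphism
  let F : Multiplicative (σ →₀ ℕ) →* AddMonoidAlgebra k ((σ →₀ ℤ) ⧸ L') :=
  { toFun := fun w => AddMonoidAlgebra.single (L'.mkQ (ι' w.toAdd)) ((r (ι' w.toAdd) : k))
    map_one' := by
      have h0 : ι' (Multiplicative.toAdd 1) = 0 := by ext i; simp [hι'app]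
      simp only [h0, map_zero, hr0, Units.val_one]
      rfl
    map_mul' := fun x y => by
      simp only [toAdd_mul, hι'add, map_add, hr_add, Units.val_mul,
        AddMonoidAlgebra.single_mul_single] }
  let Φ : MvPolynomial σ k →ₐ[k] AddMonoidAlgebra k ((σ →₀ ℤ) ⧸ L') :=
    AddMonoidAlgebra.lift k _ (σ →₀ ℕ) F
  have hmono : ∀ (w : σ →₀ ℕ) (a : k),
      Φ (monomial w a) = AddMonoidAlgebra.single (L'.mkQ (ι' w)) (a * (r (ι' w) : k)) := by
    intro w a
    rw [← single_eq_monomial]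
    show (AddMonoidAlgebra.lift k _ (σ →₀ ℕ) F) (AddMonoidAlgebra.single w a) = _
    rw [AddMonoidAlgebra.lift_single]
    simp [F, AddMonoidAlgebra.smul_single']
  -- I ⊆ ker Φ
  have hIker : c.latticeIdeal ≤ RingHom.ker Φ := by
    rw [PartialCharacter.latticeIdeal, Ideal.span_le]
    rintro f ⟨u, rfl⟩
    simp only [SetLike.mem_coe, RingHom.mem_ker]
    rw [map_sub, hmono, hmono]
    have hq : L'.mkQ (ι' (intPosPart (u : σ →₀ ℤ))) =
        L'.mkQ (ι' (intPosPart (-(u : σ →₀ ℤ)))) := by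
      rw [Submodule.mkQ_apply, Submodule.mkQ_apply, Submodule.Quotient.eq, lem1]
      exact u.2
    have hc : (1 : k) * (r (ι' (intPosPart (u : σ →₀ ℤ))) : k) =
        ((c.ρ u : kˣ) : k) * (r (ι' (intPosPart (-(u : σ →₀ ℤ)))) : k) := by
      have hsplit : ι' (intPosPart (u : σ →₀ ℤ)) =
          (u : σ →₀ ℤ) + ι' (intPosPart (-(u : σ →₀ ℤ))) :=
        eq_add_of_sub_eq (lem1 _)
      rw [hsplit, hr_add, hrL _ u.2]
      push_cast
      ring
    rw [hq, hc, sub_self]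
  -- ker Φ ⊆ I
  have hkerI : ∀ f : MvPolynomial σ k, Φ f = 0 → f ∈ c.latticeIdeal := by
    suffices H : ∀ (n : ℕ) (f : MvPolynomial σ k), f.support.card ≤ n → Φ f = 0 →
        f ∈ c.latticeIdeal from fun f hf => H f.support.card f le_rfl hf
    intro n
    induction n with
    | zero =>
      intro f hcard _
      have : f = 0 := by
        rw [← support_eq_empty, ← Finset.card_eq_zero]
        omega
      rw [this]; exact Ideal.zero_mem _
    | succ n IH =>
      intro f hcard hf0
      rcases eq_or_ne f 0 with rfl | hne
      · exact Ideal.zero_mem _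
      obtain ⟨w, hw⟩ : f.support.Nonempty := by
        rw [Finset.nonempty_iff_ne_empty, Ne, support_eq_empty]; exact hne
      have haw : coeff w f ≠ 0 := mem_support_iff.mp hw
      have hex : ∃ w' ∈ f.support, w' ≠ w ∧ L'.mkQ (ι' w') = L'.mkQ (ι' w) := by
        by_contra hcon
        push_neg at hcon
        have hexp : Φ f = ∑ v ∈ f.support,
            AddMonoidAlgebra.single (L'.mkQ (ι' v)) (coeff v f * (r (ι' v) : k)) := by
          conv_lhs => rw [f.as_sum]
          rw [map_sum]
          exact Finset.sum_congr rfl fun v _ => hmono v _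
        have h2 : (Φ f).coeff (L'.mkQ (ι' w)) = 0 := by rw [hf0]; rfl
        rw [hexp, AddMonoidAlgebra.coeff_sum, Finsupp.finset_sum_apply] at h2
        rw [Finset.sum_eq_single w] at h2
        · rw [AddMonoidAlgebra.coeff_single, Finsupp.single_apply, if_pos rfl] at h2
          exact (mul_ne_zero haw (Units.ne_zero _)) h2
        · intro v hv hvne
          rw [AddMonoidAlgebra.coeff_single, Finsupp.single_apply, if_neg (hcon v hv hvne)]
        · intro h; exact absurd hw h
      obtain ⟨w', hw's, hw'ne, hw'q⟩ := hex
      have hu : ι' w - ι' w' ∈ c.L := by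
        rw [← hmemL']
        rw [Submodule.mkQ_apply, Submodule.mkQ_apply] at hw'q
        exact (Submodule.Quotient.eq _).mp hw'q.symm
      have hb : (monomial w ((r (ι' w') : k)) - monomial w' ((r (ι' w)) : k)) ∈
          c.latticeIdeal := hbin w w' hu
      have hΦb : Φ (monomial w ((r (ι' w') : k)) - monomial w' ((r (ι' w)) : k)) = 0 :=
        RingHom.mem_ker.mp (hIker hb)
      set a := coeff w f with ha
      set b : MvPolynomial σ k :=
        monomial w ((r (ι' w') : k)) - monomial w' ((r (ι' w)) : k) with hbdef
      set f' : MvPolynomial σ k := C ((r (ι' w') : k)) * f - C a * b with hf'def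
      have hf'0 : Φ f' = 0 := by
        rw [hf'def, map_sub, map_mul, map_mul, hf0, hΦb, mul_zero, mul_zero, sub_zero]
      have hsupp : f'.support ⊆ f.support.erase w := by
        intro v hv
        rw [mem_support_iff] at hv
        have hcv : coeff v f' = (r (ι' w') : k) * coeff v f - a * coeff v b := by
          rw [hf'def, coeff_sub, coeff_C_mul, coeff_C_mul]
        rw [Finset.mem_erase, mem_support_iff]
        constructor
        · rintro rfl
          apply hv
          rw [hcv, hbdef, coeff_sub, coeff_monomial, coeff_monomial, if_pos rfl,
            if_neg hw'ne, sub_zero, ← ha]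
          ring
        · intro hvf
          apply hv
          rw [hcv, hvf, mul_zero, zero_sub, hbdef, coeff_sub, coeff_monomial, coeff_monomial]
          have hvw : w ≠ v := by
            rintro rfl
            exact haw (by rw [ha]; exact hvf)
          have hvw' : w' ≠ v := by
            rintro rfl
            exact (mem_support_iff.mp hw's) hvf
          rw [if_neg hvw, if_neg hvw', sub_zero, mul_zero, neg_zero]
      have hcard' : f'.support.card ≤ n := by
        have h1 := Finset.card_le_card hsupp
        have h2 := Finset.card_erase_of_mem hw
        omega
      have hf'I : f' ∈ c.latticeIdeal := IH f' hcard' hf'0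
      have hmul : C ((r (ι' w') : k)) * f ∈ c.latticeIdeal := by
        have : C ((r (ι' w') : k)) * f = f' + C a * b := by rw [hf'def]; ring
        rw [this]
        exact Ideal.add_mem _ hf'I (Ideal.mul_mem_left _ _ hb)
      have := Ideal.mul_mem_left _ (C (((r (ι' w'))⁻¹ : kˣ) : k)) hmul
      rwa [← mul_assoc, ← C_mul, Units.inv_mul, C_1, one_mul] at this
  have heq : c.latticeIdeal = RingHom.ker Φ :=
    le_antisymm hIker (fun f hf => hkerI f (RingHom.mem_ker.mp hf))
  rw [heq]
  exact RingHom.ker_isPrime Φ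
end

section
/- Let k be an algebraically closed field of characteristic zero, S = k[x_1,...,x_n], let I ⊆ S be a J-cellular binomial ideal, and let m be a monomial in the variables x_i with i ∉ J whose image in S/I is nonzero. Then (I : m) ∩ k[J] is a lattice ideal of k[J]; that is, there exists a partial character ρ on ℤ^J such that (I : m) ∩ k[J] = I_ρ. -/
open MvPolynomial

namespace Stmt14

variable {k : Type*} [Field k] {σ : Type*}

/-- The binomial `x^{u⁺} - lam·x^{u⁻}`. -/
noncomputable def bino (u : σ →₀ ℤ) (lam : k) : MvPolynomial σ k :=
  monomial (intPosPart u) 1 - monomial (intPosPart (-u)) lam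

theorem intPosPart_apply (u : σ →₀ ℤ) (s : σ) : intPosPart u s = (u s).toNat :=
  Finsupp.mapRange_apply

theorem intPosPart_zero : intPosPart (0 : σ →₀ ℤ) = 0 := by
  ext s; simp [intPosPart_apply]

/-- decomposition for sums -/
theorem add_decomp (u v : σ →₀ ℤ) :
    intPosPart u + intPosPart v = (intPosPart u + intPosPart v - intPosPart (u + v)) + intPosPart (u + v) ∧
    intPosPart (-u) + intPosPart (-v) = (intPosPart u + intPosPart v - intPosPart (u + v)) + intPosPart (-(u + v)) := by
  constructor <;> ext s <;>
    simp only [Finsupp.add_apply, Finsupp.tsub_apply, intPosPart_apply, Finsupp.neg_apply,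
      Finsupp.coe_add, Finsupp.coe_tsub, Pi.add_apply, Pi.sub_apply] <;> omega

theorem bino_zero : bino (0 : σ →₀ ℤ) (1 : k) = 0 := by
  simp [bino, intPosPart_zero]

theorem bino_neg (u : σ →₀ ℤ) (lam : kˣ) :
    bino (-u) ((lam⁻¹ : kˣ) : k) = (-((lam⁻¹ : kˣ) : k)) • bino u (lam : k) := by
  simp only [bino, neg_neg, smul_sub, smul_monomial, smul_eq_mul, mul_one]
  rw [sub_eq_iff_eq_add]
  have : (-((lam⁻¹ : kˣ) : k)) * (lam : k) = -1 := by
    rw [neg_mul, Units.inv_mul]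
  rw [this]
  simp [sub_eq_add_neg, add_comm]

theorem bino_key_aux (A B C D E F W : σ →₀ ℕ) (h1 : A + C = W + E) (h2 : B + D = W + F)
    (lam mu : k) :
    monomial C 1 * (monomial A 1 - monomial B lam)
      + lam • (monomial B 1 * (monomial C 1 - monomial D mu))
      = monomial W 1 * (monomial E 1 - monomial F (lam * mu)) := by
  simp only [mul_sub, monomial_mul, smul_sub, smul_monomial, one_mul, mul_one, smul_eq_mul]
  rw [show C + A = W + E by rw [add_comm]; exact h1, show B + D = W + F from h2, add_comm C B]
  abel

theorem bino_key (u v : σ →₀ ℤ) (lam mu : k) :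
    monomial (intPosPart v) 1 * bino u lam + lam • (monomial (intPosPart (-u)) 1 * bino v mu)
      = monomial (intPosPart u + intPosPart v - intPosPart (u + v)) 1 * bino (u + v) (lam * mu) := by
  obtain ⟨h1, h2⟩ := add_decomp u v
  exact bino_key_aux _ _ _ _ _ _ _ (by rw [← h1]) (by rw [← h2]) lam mu

variable (K : Ideal (MvPolynomial σ k))

/-- K contains no monomials with nonzero coefficient. -/
def NoMono : Prop := ∀ (a : σ →₀ ℕ) (d : k), monomial a d ∈ K → d = 0

/-- K is saturated with respect to monomials. -/
def Satur : Prop := ∀ (b : σ →₀ ℕ) (f : MvPolynomial σ k), monomial b 1 * f ∈ K → f ∈ K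

variable {K}

theorem bino_add_mem (hK2 : Satur K) {u v : σ →₀ ℤ} {lam mu : k}
    (hu : bino u lam ∈ K) (hv : bino v mu ∈ K) : bino (u + v) (lam * mu) ∈ K := by
  apply hK2 (intPosPart u + intPosPart v - intPosPart (u + v))
  rw [← bino_key]
  refine K.add_mem (K.mul_mem_left _ hu) ?_
  rw [smul_eq_C_mul]
  exact K.mul_mem_left _ (K.mul_mem_left _ hv)

theorem bino_uniq (hK1 : NoMono K) {u : σ →₀ ℤ} {lam mu : kˣ}
    (hl : bino u (lam : k) ∈ K) (hm : bino u (mu : k) ∈ K) : lam = mu := by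
  have h : (monomial (intPosPart (-u)) ((mu : k) - (lam : k)) : MvPolynomial σ k) ∈ K := by
    have := K.sub_mem hl hm
    simp only [bino, sub_sub_sub_cancel_left] at this
    rw [← map_sub] at this
    convert this using 2
  have := hK1 _ _ h
  exact (Units.ext (sub_eq_zero.mp this)).symm

/-- The lattice of the partial character. -/
noncomputable def theL (hK1 : NoMono K) (hK2 : Satur K) : AddSubgroup (σ →₀ ℤ) where
  carrier := {u | ∃ lam : kˣ, bino u (lam : k) ∈ K}
  zero_mem' := ⟨1, by rw [Units.val_one, bino_zero]; exact K.zero_mem⟩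
  add_mem' := by
    rintro u v ⟨l, hl⟩ ⟨m, hm⟩
    exact ⟨l * m, by rw [Units.val_mul]; exact bino_add_mem hK2 hl hm⟩
  neg_mem' := by
    rintro u ⟨l, hl⟩
    exact ⟨l⁻¹, by rw [bino_neg, smul_eq_C_mul]; exact K.mul_mem_left _ hl⟩

theorem mem_theL (hK1 : NoMono K) (hK2 : Satur K) (u : σ →₀ ℤ) :
    u ∈ theL hK1 hK2 ↔ ∃ lam : kˣ, bino u (lam : k) ∈ K := Iff.rfl

/-- The partial character attached to `K`. -/
noncomputable def thePC (hK1 : NoMono K) (hK2 : Satur K) : PartialCharacter k σ where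
  L := theL hK1 hK2
  ρ := fun u => Classical.choose ((mem_theL hK1 hK2 u.1).mp u.2)
  map_add := by
    intro u v
    apply bino_uniq hK1 (Classical.choose_spec ((mem_theL hK1 hK2 _).mp (u + v).2))
    rw [Units.val_mul]
    exact bino_add_mem hK2 (Classical.choose_spec ((mem_theL hK1 hK2 _).mp u.2))
      (Classical.choose_spec ((mem_theL hK1 hK2 _).mp v.2))

theorem thePC_spec (hK1 : NoMono K) (hK2 : Satur K) (u : (thePC hK1 hK2).L) :
    bino (u : σ →₀ ℤ) (((thePC hK1 hK2).ρ u : kˣ) : k) ∈ K :=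
  Classical.choose_spec ((mem_theL hK1 hK2 _).mp u.2)

theorem lattice_le (hK1 : NoMono K) (hK2 : Satur K) :
    (thePC hK1 hK2).latticeIdeal ≤ K := by
  rw [PartialCharacter.latticeIdeal, Ideal.span_le]
  rintro f ⟨u, rfl⟩
  exact thePC_spec hK1 hK2 u

theorem bino_mem_lattice (hK1 : NoMono K) (hK2 : Satur K) {u : σ →₀ ℤ} {lam : kˣ}
    (h : bino u (lam : k) ∈ K) : bino u (lam : k) ∈ (thePC hK1 hK2).latticeIdeal := by
  have hu : u ∈ (thePC hK1 hK2).L := ⟨lam, h⟩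
  have : lam = (thePC hK1 hK2).ρ ⟨u, hu⟩ :=
    bino_uniq hK1 h (thePC_spec hK1 hK2 ⟨u, hu⟩)
  rw [this]
  exact Ideal.subset_span ⟨⟨u, hu⟩, rfl⟩

/-- Any binomial of `K` belongs to the lattice ideal. -/
theorem binomial_mem_lattice (hK1 : NoMono K) (hK2 : Satur K) (a b : σ →₀ ℕ) (lam : k)
    (h : (monomial a 1 - monomial b lam : MvPolynomial σ k) ∈ K) :
    (monomial a 1 - monomial b lam : MvPolynomial σ k) ∈ (thePC hK1 hK2).latticeIdeal := by
  by_cases hlam : lam = 0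
  · exfalso
    subst hlam
    rw [map_zero, sub_zero] at h
    exact one_ne_zero (hK1 a 1 h)
  · set u : σ →₀ ℤ := a.mapRange (Nat.cast) Nat.cast_zero - b.mapRange (Nat.cast) Nat.cast_zero with hu
    have hua : ∀ s, u s = (a s : ℤ) - (b s : ℤ) := by
      intro s; simp [hu, Finsupp.mapRange_apply]
    have h1 : a = (a - intPosPart u) + intPosPart u := by
      ext s
      simp only [Finsupp.add_apply, Finsupp.tsub_apply, intPosPart_apply, hua,
        Finsupp.coe_add, Finsupp.coe_tsub, Pi.add_apply, Pi.sub_apply]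
      omega
    have h2 : b = (a - intPosPart u) + intPosPart (-u) := by
      ext s
      simp only [Finsupp.add_apply, Finsupp.tsub_apply, intPosPart_apply, hua,
        Finsupp.neg_apply, Finsupp.coe_add, Finsupp.coe_tsub, Pi.add_apply, Pi.sub_apply]
      omega
    have heq : (monomial a 1 - monomial b lam : MvPolynomial σ k)
        = monomial (a - intPosPart u) 1 * bino u lam := by
      rw [bino, mul_sub, monomial_mul, monomial_mul, one_mul, one_mul, ← h1, ← h2]
    have hbK : bino u lam ∈ K := hK2 _ _ (by rw [← heq]; exact h)
    rw [heq]
    exact Ideal.mul_mem_left _ _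
      (bino_mem_lattice hK1 hK2 (lam := Units.mk0 lam hlam) hbK)

end Stmt14

namespace Concrete

open Stmt14
open scoped Classical

variable {k : Type*} [Field k] {σ : Type*}

/-- filter of a polynomial by a predicate on exponents -/
noncomputable def mfilter (Q : (σ →₀ ℕ) → Prop) (p : MvPolynomial σ k) : MvPolynomial σ k :=
  letI := Classical.decPred Q
  ∑ a ∈ p.support.filter Q, monomial a (coeff a p)

theorem coeff_mfilter (Q : (σ →₀ ℕ) → Prop) (p : MvPolynomial σ k) (t : σ →₀ ℕ) :
    coeff t (mfilter Q p) = if Q t then coeff t p else 0 := by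
  rw [mfilter, coeff_sum]
  simp only [coeff_monomial]
  rw [Finset.sum_ite_eq' (p.support.filter Q) t (fun a => coeff a p)]
  by_cases hQ : Q t
  · by_cases hs : t ∈ p.support
    · simp [Finset.mem_filter, hs, hQ]
    · have h0 : coeff t p = 0 := by rwa [MvPolynomial.mem_support_iff, not_not] at hs
      simp [Finset.mem_filter, hs, hQ, h0]
  · simp [Finset.mem_filter, hQ]

theorem mfilter_add (Q : (σ →₀ ℕ) → Prop) (p q : MvPolynomial σ k) :
    mfilter Q (p + q) = mfilter Q p + mfilter Q q := by
  ext t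
  simp only [coeff_mfilter, coeff_add]
  split <;> simp

theorem mfilter_smul (Q : (σ →₀ ℕ) → Prop) (c : k) (p : MvPolynomial σ k) :
    mfilter Q (c • p) = c • mfilter Q p := by
  ext t
  simp only [coeff_mfilter, coeff_smul, smul_eq_mul]
  split <;> simp

theorem mfilter_zero (Q : (σ →₀ ℕ) → Prop) : mfilter Q (0 : MvPolynomial σ k) = 0 := by
  ext t; simp [coeff_mfilter]

theorem mfilter_sub (Q : (σ →₀ ℕ) → Prop) (p q : MvPolynomial σ k) :
    mfilter Q (p - q) = mfilter Q p - mfilter Q q := by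
  ext t
  simp only [coeff_mfilter, coeff_sub]
  split <;> simp

theorem mfilter_monomial (Q : (σ →₀ ℕ) → Prop) (u : σ →₀ ℕ) (d : k) :
    mfilter Q (monomial u d) = if Q u then monomial u d else 0 := by
  ext t
  by_cases h2 : u = t
  · subst h2
    by_cases h1 : Q u <;> simp [coeff_mfilter, coeff_monomial, h1]
  · by_cases h1 : Q u <;> simp [coeff_mfilter, coeff_monomial, h1, h2] <;> intro h <;> simp [h2]

theorem mfilter_add_not (Q : (σ →₀ ℕ) → Prop) (p : MvPolynomial σ k) :
    mfilter Q p + mfilter (fun a => ¬ Q a) p = p := by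
  ext t
  simp only [coeff_add, coeff_mfilter]
  by_cases h : Q t <;> simp [h]

theorem mem_support_mfilter (Q : (σ →₀ ℕ) → Prop) (p : MvPolynomial σ k) (t : σ →₀ ℕ) :
    t ∈ (mfilter Q p).support ↔ Q t ∧ t ∈ p.support := by
  simp only [MvPolynomial.mem_support_iff, coeff_mfilter]
  by_cases h : Q t <;> simp [h]

end Concrete

namespace Cell

open Stmt14 Concrete

variable {k : Type*} [Field k] {σ : Type*} {I : Ideal (MvPolynomial σ k)}

/-- Cancel a power of a nonzerodivisor variable. -/
theorem cancel_X_pow (hi : ∀ f : MvPolynomial σ k, X i * f ∈ I → f ∈ I) (e : ℕ) :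
    ∀ g : MvPolynomial σ k, X i ^ e * g ∈ I → g ∈ I := by
  induction e with
  | zero => intro g hg; simpa using hg
  | succ e ih =>
    intro g hg
    apply hi
    apply ih
    rw [pow_succ, mul_assoc] at hg
    exact hg

/-- Cancel a monomial all of whose variables are nonzerodivisors mod `I`. -/
theorem cancel_monomial {P : σ → Prop}
    (hcanc : ∀ i, P i → ∀ f : MvPolynomial σ k, X i * f ∈ I → f ∈ I)
    (t : σ →₀ ℕ) (ht : ∀ i ∈ t.support, P i) :
    ∀ g : MvPolynomial σ k, monomial t (1 : k) * g ∈ I → g ∈ I := by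
  induction t using Finsupp.induction with
  | zero => intro g hg; simpa [monomial_zero'] using hg
  | single_add a b f ha0 hb ih =>
    intro g hg
    have haP : P a := by
      apply ht
      rw [Finsupp.mem_support_iff, Finsupp.add_apply, Finsupp.single_eq_same,
        Finsupp.notMem_support_iff.mp ha0]
      simpa using hb
    have hfP : ∀ i ∈ f.support, P i := by
      intro i hi
      apply ht
      have hia : i ≠ a := fun h => ha0 (h ▸ hi)
      rw [Finsupp.mem_support_iff, Finsupp.add_apply, Finsupp.single_eq_of_ne hia, zero_add]
      exact Finsupp.mem_support_iff.mp hi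
    apply ih hfP
    apply cancel_X_pow (hcanc a haP) b
    have : X a ^ b * (monomial f (1:k) * g) = monomial ((Finsupp.single a b) + f) (1:k) * g := by
      rw [monomial_single_add, mul_assoc]
    rw [this]
    exact hg

/-- The congruence relation mod `I` on exponent vectors. -/
def Rel (I : Ideal (MvPolynomial σ k)) (s t : σ →₀ ℕ) : Prop :=
  (∃ lam : kˣ, (monomial s 1 - monomial t (lam : k) : MvPolynomial σ k) ∈ I) ∨
    ((monomial s (1 : k) : MvPolynomial σ k) ∈ I ∧ (monomial t (1 : k) : MvPolynomial σ k) ∈ I)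

theorem Rel.refl (s : σ →₀ ℕ) : Rel I s s :=
  Or.inl ⟨1, by simp⟩

theorem Rel.symm {s t : σ →₀ ℕ} (h : Rel I s t) : Rel I t s := by
  rcases h with ⟨lam, h⟩ | ⟨h1, h2⟩
  · refine Or.inl ⟨lam⁻¹, ?_⟩
    have : (monomial t 1 - monomial s ((lam⁻¹ : kˣ) : k) : MvPolynomial σ k)
        = (-((lam⁻¹ : kˣ) : k)) • (monomial s 1 - monomial t (lam : k)) := by
      simp only [smul_sub, smul_monomial, smul_eq_mul, mul_one]
      rw [show (-((lam⁻¹ : kˣ) : k)) * (lam : k) = -1 by rw [neg_mul, Units.inv_mul]]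
      simp [sub_eq_add_neg, add_comm]
    rw [this, smul_eq_C_mul]
    exact I.mul_mem_left _ h
  · exact Or.inr ⟨h2, h1⟩

theorem Rel.trans {s t r : σ →₀ ℕ} (h1 : Rel I s t) (h2 : Rel I t r) : Rel I s r := by
  rcases h1 with ⟨lam, h1⟩ | ⟨hs, ht⟩
  · rcases h2 with ⟨mu, h2⟩ | ⟨ht, hr⟩
    · refine Or.inl ⟨lam * mu, ?_⟩
      have : (monomial s 1 - monomial r ((lam * mu : kˣ) : k) : MvPolynomial σ k)
          = (monomial s 1 - monomial t (lam : k))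
            + (lam : k) • (monomial t 1 - monomial r (mu : k)) := by
        simp only [smul_sub, smul_monomial, smul_eq_mul, mul_one, Units.val_mul]
        ring
      rw [this]
      refine I.add_mem h1 ?_
      rw [smul_eq_C_mul]
      exact I.mul_mem_left _ h2
    · refine Or.inr ⟨?_, hr⟩
      have : (monomial s (1:k) : MvPolynomial σ k)
          = (monomial s 1 - monomial t (lam : k)) + (lam : k) • monomial t 1 := by
        simp [smul_monomial]
      rw [this]
      refine I.add_mem h1 ?_
      rw [smul_eq_C_mul]
      exact I.mul_mem_left _ ht
  · rcases h2 with ⟨mu, h2⟩ | ⟨ht, hr⟩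
    · refine Or.inr ⟨hs, ?_⟩
      have : (monomial r (1:k) : MvPolynomial σ k)
          = ((mu⁻¹ : kˣ) : k) • (monomial t 1 - (monomial t 1 - monomial r (mu : k))) := by
        simp only [sub_sub_cancel, smul_monomial, smul_eq_mul]
        rw [Units.inv_mul]
      rw [this, smul_eq_C_mul]
      exact I.mul_mem_left _ (I.sub_mem ht h2)
    · exact Or.inr ⟨hs, hr⟩

/-- A binomial ideal is spanned over `k` by the binomials it contains. -/
theorem mem_span_binomials (hbin : ∃ B : Set (MvPolynomial σ k),
      (∀ f ∈ B, ∃ (u v : σ →₀ ℕ) (a : k), f = monomial u 1 - monomial v a) ∧ I = Ideal.span B)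
    {g : MvPolynomial σ k} (hg : g ∈ I) :
    g ∈ Submodule.span k {g : MvPolynomial σ k |
      g ∈ I ∧ ∃ (p q : σ →₀ ℕ) (d : k), g = monomial p 1 - monomial q d} := by
  classical
  set V : Submodule k (MvPolynomial σ k) := Submodule.span k {g : MvPolynomial σ k |
      g ∈ I ∧ ∃ (p q : σ →₀ ℕ) (d : k), g = monomial p 1 - monomial q d} with hV
  obtain ⟨B, hB, hIB⟩ := hbin
  -- V is closed under multiplication by arbitrary polynomials
  have hVmul : ∀ (p : MvPolynomial σ k) {g}, g ∈ V → p * g ∈ V := by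
    intro p g hgV
    induction hgV using Submodule.span_induction with
    | mem x hx =>
      obtain ⟨hxI, p', q', d, rfl⟩ := hx
      induction p using MvPolynomial.induction_on' with
      | monomial u e =>
        have key : monomial u e * (monomial p' 1 - monomial q' d)
            = e • (monomial u 1 * (monomial p' 1 - monomial q' d)) := by
          simp only [mul_sub, monomial_mul, smul_sub, smul_monomial, smul_eq_mul,
            one_mul, mul_one]
        rw [key]
        refine V.smul_mem _ (Submodule.subset_span ?_)
        refine ⟨I.mul_mem_left _ hxI, u + p', u + q', d, ?_⟩
        simp [mul_sub, monomial_mul]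
      | add p1 p2 h1 h2 =>
        rw [add_mul]
        exact V.add_mem h1 h2
    | zero => rw [mul_zero]; exact V.zero_mem
    | add x y hx hy ihx ihy => rw [mul_add]; exact V.add_mem ihx ihy
    | smul a x hx ihx => rw [mul_smul_comm]; exact V.smul_mem a ihx
  rw [hIB] at hg
  induction hg using Submodule.span_induction with
  | mem x hx =>
    obtain ⟨u, v, a, rfl⟩ := hB x hx
    exact Submodule.subset_span ⟨hIB ▸ Ideal.subset_span hx, u, v, a, rfl⟩
  | zero => exact V.zero_mem
  | add x y hx hy ihx ihy => exact V.add_mem ihx ihy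
  | smul a x hx ihx => rw [smul_eq_mul]; exact hVmul a ihx

/-- The projection onto a congruence class preserves membership in `I`. -/
theorem proj_mem (hbin : ∃ B : Set (MvPolynomial σ k),
      (∀ f ∈ B, ∃ (u v : σ →₀ ℕ) (a : k), f = monomial u 1 - monomial v a) ∧ I = Ideal.span B)
    (s : σ →₀ ℕ) {g : MvPolynomial σ k} (hg : g ∈ I) :
    mfilter (Rel I s) g ∈ I := by
  have hgV := mem_span_binomials hbin hg
  clear hg
  induction hgV using Submodule.span_induction with
  | mem x hx =>
    obtain ⟨hxI, p, q, d, rfl⟩ := hx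
    by_cases hd : d = 0
    · subst hd
      rw [map_zero, sub_zero, mfilter_monomial]
      split
      · simpa using hxI
      · exact I.zero_mem
    by_cases hpq : p = q
    · subst hpq
      rw [show (monomial p 1 - monomial p d : MvPolynomial σ k) = monomial p (1 - d) by
        rw [map_sub]]
      rw [mfilter_monomial]
      split
      · rwa [map_sub] at *
      · exact I.zero_mem
    · have hrel : Rel I p q := Or.inl ⟨Units.mk0 d hd, by simpa using hxI⟩
      rw [mfilter_sub, mfilter_monomial, mfilter_monomial]
      by_cases hsp : Rel I s p
      · have hsq : Rel I s q := hsp.trans hrel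
        simpa [hsp, hsq] using hxI
      · have hsq : ¬ Rel I s q := fun h => hsp (h.trans hrel.symm)
        simp [hsp, hsq]
  | zero => rw [mfilter_zero]; exact I.zero_mem
  | add x y hx hy ihx ihy => rw [mfilter_add]; exact I.add_mem ihx ihy
  | smul a x hx ihx => rw [mfilter_smul, smul_eq_C_mul]; exact I.mul_mem_left _ ihx

end Cell


namespace Main

open Stmt14 Concrete Cell

variable {k : Type*} [Field k] {n : ℕ} {J : Set (Fin n)} {I : Ideal (MvPolynomial (Fin n) k)}
  {w : Fin n →₀ ℕ} {c : k}

/-- The embedding of exponent vectors on `J` into exponent vectors on `Fin n`. -/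
noncomputable def emb (J : Set (Fin n)) : (↥J →₀ ℕ) → (Fin n →₀ ℕ) :=
  Finsupp.mapDomain Subtype.val

theorem emb_support (a : ↥J →₀ ℕ) : ∀ i ∈ (emb J a).support, i ∈ J := by
  classical
  intro i hi
  obtain ⟨j, -, rfl⟩ := Finset.mem_image.mp (Finsupp.mapDomain_support hi)
  exact j.2

theorem inclJ_monomial (a : ↥J →₀ ℕ) (d : k) :
    inclJ k J (monomial a d) = monomial (emb J a) d :=
  rename_monomial _ _ _

theorem memK_iff (f : MvPolynomial ↥J k) :
    f ∈ elimJ J (I.colon (Ideal.span {monomial w c}))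
      ↔ inclJ k J f * monomial w c ∈ I := by
  rw [elimJ, Ideal.mem_comap, Ideal.mem_colon_span_singleton]

theorem cancelJ (hcell : IsCellular J I) (a : ↥J →₀ ℕ) :
    ∀ g : MvPolynomial (Fin n) k, monomial (emb J a) 1 * g ∈ I → g ∈ I :=
  cancel_monomial (P := (· ∈ J)) (fun i hi => hcell.1 i hi) _ (emb_support a)

theorem Km_noMono (hcell : IsCellular J I) (hc : c ≠ 0) (hmI : monomial w c ∉ I) :
    NoMono (elimJ J (I.colon (Ideal.span {monomial w c}))) := by
  intro a d hd
  by_contra hd0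
  rw [memK_iff, inclJ_monomial, monomial_mul] at hd
  have h1 : monomial (emb J a) (1:k) * monomial w (d * c) = monomial (emb J a + w) (d * c) := by
    rw [monomial_mul, one_mul]
  have h2 : monomial w (d * c) ∈ I := cancelJ hcell a _ (by rw [h1]; exact hd)
  apply hmI
  have h3 : (monomial w c : MvPolynomial (Fin n) k) = d⁻¹ • monomial w (d * c) := by
    rw [smul_monomial, smul_eq_mul, ← mul_assoc, inv_mul_cancel₀ hd0, one_mul]
  rw [h3, smul_eq_C_mul]
  exact I.mul_mem_left _ h2

theorem Km_satur (hcell : IsCellular J I) :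
    Satur (elimJ J (I.colon (Ideal.span {monomial w c}))) := by
  intro b f hbf
  rw [memK_iff] at hbf ⊢
  rw [map_mul, inclJ_monomial, mul_assoc] at hbf
  exact cancelJ hcell b _ hbf

theorem filtmul (Q : (Fin n →₀ ℕ) → Prop) (f : MvPolynomial ↥J k) :
    mfilter Q (inclJ k J f * monomial w c)
      = inclJ k J (mfilter (fun a => Q (emb J a + w)) f) * monomial w c := by
  induction f using MvPolynomial.induction_on' with
  | monomial a d =>
    rw [inclJ_monomial, monomial_mul, mfilter_monomial, mfilter_monomial]
    by_cases hQ : Q (emb J a + w) <;> simp [hQ, inclJ_monomial, monomial_mul]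
  | add p q ihp ihq =>
    rw [map_add, add_mul, mfilter_add, mfilter_add, map_add, add_mul, ihp, ihq]

theorem binK_mem (a0 a : ↥J →₀ ℕ) (lam : kˣ)
    (h : (monomial (emb J a0 + w) 1 - monomial (emb J a + w) (lam : k)
        : MvPolynomial (Fin n) k) ∈ I) :
    (monomial a0 1 - monomial a (lam : k) : MvPolynomial ↥J k)
      ∈ elimJ J (I.colon (Ideal.span {monomial w c})) := by
  rw [memK_iff]
  have heq : (inclJ k J) (monomial a0 1 - monomial a (lam : k)) * monomial w c
      = C c * (monomial (emb J a0 + w) 1 - monomial (emb J a + w) (lam : k)) := by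
    rw [map_sub, inclJ_monomial, inclJ_monomial, sub_mul, monomial_mul, monomial_mul,
      ← smul_eq_C_mul, smul_sub, smul_monomial, smul_monomial]
    simp [mul_comm]
  rw [heq]
  exact I.mul_mem_left _ h

end Main

namespace Main

open Stmt14 Concrete Cell

variable {k : Type*} [Field k] {n : ℕ} {J : Set (Fin n)} {I : Ideal (MvPolynomial (Fin n) k)}
  {w : Fin n →₀ ℕ} {c : k}

theorem key_induction (hbin : IsBinomialIdeal I) (hcell : IsCellular J I)
    (hc : c ≠ 0) (hmI : monomial w c ∉ I) :
    ∀ (N : ℕ) (f : MvPolynomial ↥J k), f.support.card ≤ N →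
      f ∈ elimJ J (I.colon (Ideal.span {monomial w c})) →
      f ∈ (thePC (Km_noMono hcell hc hmI) (Km_satur hcell)).latticeIdeal := by
  have hK1 := Km_noMono (w := w) hcell hc hmI
  have hK2 := Km_satur (w := w) (c := c) hcell
  intro N
  induction N with
  | zero =>
    intro f hcard hf
    have : f = 0 := by
      rw [← MvPolynomial.support_eq_empty, ← Finset.card_eq_zero]
      omega
    rw [this]
    exact Submodule.zero_mem _
  | succ N ihN =>
    intro f hcard hf
    by_cases hf0 : f = 0
    · rw [hf0]; exact Submodule.zero_mem _
    obtain ⟨a0, ha0⟩ := MvPolynomial.support_nonempty.mpr hf0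
    set P : (↥J →₀ ℕ) → Prop := fun a => Rel I (emb J a0 + w) (emb J a + w) with hP
    set f0 := mfilter P f with hf0def
    set f1 := mfilter (fun a => ¬ P a) f with hf1def
    have hsum : f0 + f1 = f := mfilter_add_not P f
    -- f0 lies in K via the projection lemma
    have hf0K : f0 ∈ elimJ J (I.colon (Ideal.span {monomial w c})) := by
      rw [memK_iff]
      have := proj_mem hbin (emb J a0 + w) ((memK_iff f).mp hf)
      rwa [filtmul] at this
    have hf1K : f1 ∈ elimJ J (I.colon (Ideal.span {monomial w c})) := by
      have : f1 = f - f0 := by rw [← hsum]; ring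
      rw [this]
      exact Submodule.sub_mem _ hf hf0K
    -- the support of f1 is strictly smaller
    have hcard1 : f1.support.card ≤ N := by
      have hsub : f1.support ⊆ f.support.erase a0 := by
        intro t ht
        rw [mem_support_mfilter] at ht
        refine Finset.mem_erase.mpr ⟨?_, ht.2⟩
        rintro rfl
        exact ht.1 (Rel.refl _)
      have := Finset.card_le_card hsub
      rw [Finset.card_erase_of_mem ha0] at this
      omega
    have hf1L := ihN f1 hcard1 hf1K
    -- now handle f0
    have hs0 : (monomial (emb J a0 + w) (1:k) : MvPolynomial (Fin n) k) ∉ I := by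
      intro hcon
      have heq : monomial (emb J a0) (1:k) * monomial w (1:k)
          = monomial (emb J a0 + w) (1:k) := by rw [monomial_mul, one_mul]
      have hw1 : (monomial w (1:k) : MvPolynomial (Fin n) k) ∈ I :=
        cancelJ hcell a0 _ (by rw [heq]; exact hcon)
      apply hmI
      have : (monomial w c : MvPolynomial (Fin n) k) = c • monomial w (1:k) := by
        rw [smul_monomial, smul_eq_mul, mul_one]
      rw [this, smul_eq_C_mul]
      exact I.mul_mem_left _ hw1
    have hbinoK : ∀ a ∈ f0.support, ∃ lam : kˣ,
        (monomial a0 1 - monomial a (lam : k) : MvPolynomial ↥J k)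
          ∈ elimJ J (I.colon (Ideal.span {monomial w c})) := by
      intro a ha
      rw [mem_support_mfilter] at ha
      rcases ha.1 with ⟨lam, hl⟩ | ⟨h1, -⟩
      · exact ⟨lam, binK_mem a0 a lam hl⟩
      · exact absurd h1 hs0
    choose lam hlam using hbinoK
    set e : k := ∑ a ∈ f0.support.attach, coeff a.1 f0 * ((lam a.1 a.2 : k))⁻¹ with he_def
    set G : MvPolynomial ↥J k := ∑ a ∈ f0.support.attach,
      (coeff a.1 f0 * ((lam a.1 a.2 : k))⁻¹) •
        (monomial a0 1 - monomial a.1 ((lam a.1 a.2 : k))) with hG_def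
    have hGK : G ∈ elimJ J (I.colon (Ideal.span {monomial w c})) := by
      refine Submodule.sum_mem _ fun a _ => ?_
      rw [smul_eq_C_mul]
      exact Ideal.mul_mem_left _ _ (hlam a.1 a.2)
    have hGL : G ∈ (thePC hK1 hK2).latticeIdeal := by
      refine Submodule.sum_mem _ fun a _ => ?_
      rw [smul_eq_C_mul]
      exact Ideal.mul_mem_left _ _
        (binomial_mem_lattice hK1 hK2 _ _ _ (hlam a.1 a.2))
    have hGe : G + f0 = monomial a0 e := by
      have hterm : ∀ a : {x // x ∈ f0.support},
          (coeff a.1 f0 * ((lam a.1 a.2 : k))⁻¹) •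
            (monomial a0 1 - monomial a.1 ((lam a.1 a.2 : k)) : MvPolynomial ↥J k)
          = monomial a0 (coeff a.1 f0 * ((lam a.1 a.2 : k))⁻¹)
            - monomial a.1 (coeff a.1 f0) := by
        intro a
        rw [smul_sub, smul_monomial, smul_monomial, smul_eq_mul, smul_eq_mul, mul_one,
          mul_assoc, inv_mul_cancel₀ (Units.ne_zero (lam a.1 a.2)), mul_one]
      rw [hG_def]
      rw [Finset.sum_congr rfl (fun a _ => hterm a), Finset.sum_sub_distrib]
      have h1 : ∑ a ∈ f0.support.attach, (monomial a0 (coeff a.1 f0 * ((lam a.1 a.2 : k))⁻¹)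
          : MvPolynomial ↥J k) = monomial a0 e := by
        rw [he_def, map_sum (monomial a0)]
      have h2 : ∑ a ∈ f0.support.attach, (monomial a.1 (coeff a.1 f0) : MvPolynomial ↥J k)
          = f0 := by
        rw [Finset.sum_attach f0.support (fun a => (monomial a (coeff a f0) : MvPolynomial ↥J k))]
        exact support_sum_monomial_coeff f0
      rw [h1, h2]
      ring
    have he0 : e = 0 := hK1 a0 e (by rw [← hGe]; exact Submodule.add_mem _ hGK hf0K)
    have hf0L : f0 ∈ (thePC hK1 hK2).latticeIdeal := by
      have : f0 = -G := by
        have := hGe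
        rw [he0, map_zero] at this
        linear_combination this
      rw [this]
      exact Submodule.neg_mem _ hGL
    rw [← hsum]
    exact Submodule.add_mem _ hf0L hf1L

end Main

/-- For a `J`-cellular binomial ideal `I` and a monomial `m` off `J`
which is nonzero mod `I`, the ideal `(I : m) ∩ k[J]` is a lattice ideal of `k[J]`. -/
theorem stmt14 {k : Type*} [Field k] [IsAlgClosed k] [CharZero k] {n : ℕ}
    (J : Set (Fin n)) (I : Ideal (MvPolynomial (Fin n) k))
    (hbin : IsBinomialIdeal I) (hcell : IsCellular J I)
    (m : MvPolynomial (Fin n) k) (hm : IsMonomialOff J m) (hmI : m ∉ I) :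
    ∃ ρ : PartialCharacter k ↥J,
      elimJ J (I.colon (Ideal.span {m})) = ρ.latticeIdeal := by
  obtain ⟨w, c, hc, hw, rfl⟩ := hm
  exact ⟨Stmt14.thePC (Main.Km_noMono hcell hc hmI) (Main.Km_satur hcell),
    le_antisymm
      (fun f hf => Main.key_induction hbin hcell hc hmI f.support.card f le_rfl hf)
      (Stmt14.lattice_le _ _)⟩
end
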